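/- arXiv:1605.01551 — 4 statements merged into one kernel-verified Lean document; each statement's English description precedes it below -/
import Mathlib

section
/- Assume (A3) and (A6). The unique solution (f₋, f₊) of Luckock's equation satisfies λ₊(I₊) − f₋(I₋)·λ₊(I₋) = λ₋(I₋) − f₊(I₊)·λ₋(I₊). -/
open MeasureTheory Set
open scoped ENNReal

noncomputable section

/-- The right limit of `f` at `x`, with the convention `f(b+) := f b` at the
right endpoint `b`. -/
def rLim (b : ℝ) (f : ℝ → ℝ) (x : ℝ) : ℝ :=
  if x < b then Function.rightLim f x else f b

/-- `ν` is the Lebesgue-Stieltjes signed measure `df` of `f` on the interval `[a,b]`,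
with the conventions `f(a−) := f a` and `f(b+) := f b`. -/
def IsLS (a b : ℝ) (f : ℝ → ℝ) (ν : MeasureTheory.SignedMeasure ℝ) : Prop :=
  (∀ s : Set ℝ, MeasurableSet s → s ∩ Set.Icc a b = ∅ → ν s = 0) ∧
  (∀ x y : ℝ, a ≤ x → x ≤ y → y ≤ b → ν (Set.Ioc x y) = rLim b f y - rLim b f x) ∧
  ν {a} = rLim b f a - f a

/-- The integral `∫_s g dν` of `g` over `s` against the signed measure `ν`. -/
def sInt (ν : MeasureTheory.SignedMeasure ℝ) (g : ℝ → ℝ) (s : Set ℝ) : ℝ :=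
  (∫ x in s, g x ∂ν.toJordanDecomposition.posPart) -
    ∫ x in s, g x ∂ν.toJordanDecomposition.negPart

/-- Assumption (A3): `lm` (demand) is continuous and nonincreasing, `lp` (supply) is
continuous and nondecreasing on `[a,b]`; both are nonnegative. -/
def A3 (a b : ℝ) (lm lp : ℝ → ℝ) : Prop :=
  ContinuousOn lm (Set.Icc a b) ∧ ContinuousOn lp (Set.Icc a b) ∧
  AntitoneOn lm (Set.Icc a b) ∧ MonotoneOn lp (Set.Icc a b) ∧
  (∀ x ∈ Set.Icc a b, 0 ≤ lm x) ∧ (∀ x ∈ Set.Icc a b, 0 ≤ lp x)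

/-- Assumption (A6): the rates of market orders are positive. -/
def A6 (a b : ℝ) (lm lp : ℝ → ℝ) : Prop := 0 < lp a ∧ 0 < lm b

/-- `(fm, fp)` is a solution of Luckock's equation on `[a,b]` for demand/supply `lm, lp`:
both are continuous of bounded variation, `fm dlp + lm dfp = 0` and `fp dlm + lp dfm = 0`
as signed measures on `[a,b]`, and `fm b = 1 = fp a`. -/
def LuckockSol (a b : ℝ) (lm lp fm fp : ℝ → ℝ) : Prop :=
  ContinuousOn fm (Set.Icc a b) ∧ ContinuousOn fp (Set.Icc a b) ∧
  BoundedVariationOn fm (Set.Icc a b) ∧ BoundedVariationOn fp (Set.Icc a b) ∧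
  fm b = 1 ∧ fp a = 1 ∧
  ∀ νlm νlp νfm νfp : MeasureTheory.SignedMeasure ℝ,
    IsLS a b lm νlm → IsLS a b lp νlp → IsLS a b fm νfm → IsLS a b fp νfp →
    ∀ s : Set ℝ, MeasurableSet s →
      sInt νlp fm s + sInt νfp lm s = 0 ∧ sInt νlm fp s + sInt νfm lp s = 0

/-!
Adding the two equations of Luckock's system and integrating over `(I₋, I₊]` gives
`∫ fm dλ₊ + ∫ λ₊ dfm + ∫ fp dλ₋ + ∫ λ₋ dfp = 0`. As all four functions are continuous,
Stieltjes integration by parts turns the left side into the increment of `fm λ₊ + fp λ₋` from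
`I₋` to `I₊`, and the boundary conditions `fm I₊ = 1 = fp I₋` make this the claimed identity.
The hypothesis of `LuckockSol` is applied to concrete signed measures: extended by constants
outside `[I₋, I₊]`, each function `f` is the difference `V - (V - f)` of two monotone functions,
`V` being its variation from `I₋`.
-/

open Filter Function
open scoped Topology

instance isFiniteMeasure_restrict_Ioc (μ : Measure ℝ) [IsLocallyFiniteMeasure μ] (a b : ℝ) :
    IsFiniteMeasure (μ.restrict (Ioc a b)) :=
  isFiniteMeasure_restrict.2 measure_Ioc_lt_top.ne

instance isFiniteMeasure_restrict_Icc (μ : Measure ℝ) [IsLocallyFiniteMeasure μ] (a b : ℝ) :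
    IsFiniteMeasure (μ.restrict (Icc a b)) :=
  isFiniteMeasure_restrict.2 measure_Icc_lt_top.ne

section

variable {a b : ℝ}

theorem Monotone.integrableOn_Ioc {g : ℝ → ℝ} (hg : Monotone g) (μ : Measure ℝ)
    [IsLocallyFiniteMeasure μ] : IntegrableOn g (Ioc a b) μ :=
  (hg.locallyIntegrable.integrableOn_isCompact isCompact_Icc).mono_set Ioc_subset_Icc_self

theorem Monotone.leftLim_sub_leftLim {P Q F : ℝ → ℝ} (hP : Monotone P) (hQ : Monotone Q)
    (hF : Continuous F) (h : ∀ x, P x - Q x = F x) (x : ℝ) :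
    leftLim P x - leftLim Q x = F x :=
  tendsto_nhds_unique ((hP.tendsto_leftLim x).sub (hQ.tendsto_leftLim x))
    (by simpa only [h] using (hF.tendsto x).mono_left nhdsWithin_le_nhds)

theorem Monotone.rightLim_sub_rightLim {P Q F : ℝ → ℝ} (hP : Monotone P) (hQ : Monotone Q)
    (hF : Continuous F) (h : ∀ x, P x - Q x = F x) (x : ℝ) :
    rightLim P x - rightLim Q x = F x :=
  tendsto_nhds_unique ((hP.tendsto_rightLim x).sub (hQ.tendsto_rightLim x))
    (by simpa only [h] using (hF.tendsto x).mono_left nhdsWithin_le_nhds)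

theorem MonotoneOn.boundedVariationOn_Icc {f : ℝ → ℝ} (hf : MonotoneOn f (Icc a b)) :
    BoundedVariationOn f (Icc a b) :=
  hf.boundedVariationOn fun _ hx =>
    abs_le_max_abs_abs (hf ⟨le_rfl, hx.1.trans hx.2⟩ hx hx.1)
      (hf hx ⟨hx.1.trans hx.2, le_rfl⟩ hx.2)

theorem AntitoneOn.boundedVariationOn_Icc {f : ℝ → ℝ} (hf : AntitoneOn f (Icc a b)) :
    BoundedVariationOn f (Icc a b) := by
  simpa [comp_def] using
    LipschitzWith.id.neg.comp_boundedVariationOn hf.neg.boundedVariationOn_Icc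

theorem BoundedVariationOn.exists_stieltjesFunction_sub_eq {f : ℝ → ℝ}
    (hbv : BoundedVariationOn f (Icc a b)) (hf : ContinuousOn f (Icc a b)) (hab : a ≤ b) :
    ∃ P Q : StieltjesFunction ℝ, ∀ x, P x - Q x = IccExtend hab ((Icc a b).domRestrict f) x := by
  have hF : Continuous (IccExtend hab ((Icc a b).domRestrict f)) := hf.domRestrict.Icc_extend'
  have hloc := hbv.locallyBoundedVariationOn
  let p : ℝ → ℝ := fun x => variationOnFromTo f (Icc a b) a (projIcc a b hab x)
  have hp : Monotone p := fun x y h =>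
    variationOnFromTo.monotoneOn hloc (left_mem_Icc.2 hab) (projIcc a b hab x).2
      (projIcc a b hab y).2 (monotone_projIcc hab h)
  have hq : Monotone (p - IccExtend hab ((Icc a b).domRestrict f)) := fun x y h =>
    variationOnFromTo.sub_self_monotoneOn hloc (left_mem_Icc.2 hab) (projIcc a b hab x).2
      (projIcc a b hab y).2 (monotone_projIcc hab h)
  refine ⟨hp.stieltjesFunction, hq.stieltjesFunction, fun x => ?_⟩
  rw [Monotone.stieltjesFunction_eq, Monotone.stieltjesFunction_eq]
  exact hp.rightLim_sub_rightLim hq hF (fun y => sub_sub_cancel _ _) x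

theorem rLim_eq_of_mem {f : ℝ → ℝ} (hf : ContinuousOn f (Icc a b)) {x : ℝ} (hx : x ∈ Icc a b) :
    rLim b f x = f x := by
  unfold rLim
  split_ifs with h
  · exact ((hf x hx).mono_of_mem_nhdsWithin (Icc_mem_nhdsGE_of_mem ⟨hx.1, h⟩)).rightLim_eq
  · rw [le_antisymm hx.2 (not_lt.1 h)]

theorem sInt_congr_fun {ν : SignedMeasure ℝ} {g g' : ℝ → ℝ} {s : Set ℝ} (hs : MeasurableSet s)
    (h : EqOn g g' s) : sInt ν g s = sInt ν g' s := by
  rw [sInt, sInt, setIntegral_congr_fun hs h, setIntegral_congr_fun hs h]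

theorem sInt_toSignedMeasure_sub (μ₁ μ₂ : Measure ℝ) [IsFiniteMeasure μ₁] [IsFiniteMeasure μ₂]
    {g : ℝ → ℝ} (hg : Measurable g) {C : ℝ} (hC : ∀ x, ‖g x‖ ≤ C) (s : Set ℝ) :
    sInt (μ₁.toSignedMeasure - μ₂.toSignedMeasure) g s
      = ∫ x in s, g x ∂μ₁ - ∫ x in s, g x ∂μ₂ := by
  set j := (μ₁.toSignedMeasure - μ₂.toSignedMeasure).toJordanDecomposition
  have hj : j.posPart + μ₂ = j.negPart + μ₁ := by
    have hjordan :=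
      (μ₁.toSignedMeasure - μ₂.toSignedMeasure).toSignedMeasure_toJordanDecomposition
    rw [JordanDecomposition.toSignedMeasure] at hjordan
    rw [← Measure.toSignedMeasure_eq_toSignedMeasure_iff, Measure.toSignedMeasure_add,
      Measure.toSignedMeasure_add, add_comm j.negPart.toSignedMeasure,
      ← sub_eq_sub_iff_add_eq_add]
    exact hjordan
  have hint : ∀ (μ : Measure ℝ) [IsFiniteMeasure μ], IntegrableOn g s μ := fun μ _ =>
    (Integrable.of_bound hg.aestronglyMeasurable C (ae_of_all _ hC)).integrableOn
  have hsum := congrArg (fun μ => ∫ x in s, g x ∂μ) hj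
  simp only [Measure.restrict_add] at hsum
  rw [integral_add_measure (hint _) (hint _), integral_add_measure (hint _) (hint _)] at hsum
  rw [sInt]
  linarith

end

namespace StieltjesFunction

variable (F G : StieltjesFunction ℝ) {a b : ℝ}

theorem measureReal_Ioc {x y : ℝ} (hxy : x ≤ y) : G.measure.real (Ioc x y) = G y - G x := by
  rw [measureReal_def, measure_Ioc, ENNReal.toReal_ofReal (sub_nonneg.2 (G.mono hxy))]

theorem measureReal_singleton (x : ℝ) : G.measure.real {x} = G x - leftLim G x := by
  rw [measureReal_def, measure_singleton,
    ENNReal.toReal_ofReal (sub_nonneg.2 (G.mono.leftLim_le le_rfl))]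

theorem measureReal_restrict_Ioc_Iic {x : ℝ} (hx : x ∈ Ioc a b) :
    (G.measure.restrict (Ioc a b)).real (Iic x) = G x - G a := by
  rw [measureReal_restrict_apply measurableSet_Iic, Iic_inter_Ioc_of_le hx.2,
    G.measureReal_Ioc hx.1.le]

theorem measureReal_restrict_Ioc_Iio {x : ℝ} (hx : x ∈ Ioc a b) :
    (G.measure.restrict (Ioc a b)).real (Iio x) = leftLim G x - G a := by
  have : Iio x ∩ Ioc a b = Ioo a x := by
    ext y; simp only [mem_inter_iff, mem_Iio, mem_Ioc, mem_Ioo]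
    exact ⟨fun h => ⟨h.2.1, h.1⟩, fun h => ⟨h.2, h.1, h.2.le.trans hx.2⟩⟩
  rw [measureReal_restrict_apply measurableSet_Iio, this, measureReal_def, measure_Ioo,
    ENNReal.toReal_ofReal (sub_nonneg.2 (G.mono.le_leftLim hx.1))]

theorem measureReal_restrict_Ioc_univ (hab : a ≤ b) :
    (G.measure.restrict (Ioc a b)).real univ = G b - G a := by
  rw [measureReal_restrict_apply_univ, G.measureReal_Ioc hab]

/-- Fubini on the square `(a, b]²`, split along the diagonal: the points on the diagonal are
counted by `dF` in the first integral, which is why the second one sees `F(x-)`. -/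
theorem integral_Ioc_add_integral_Ioc_leftLim (hab : a ≤ b) :
    ∫ x in Ioc a b, G x ∂F.measure + ∫ x in Ioc a b, leftLim F x ∂G.measure
      = F b * G b - F a * G a := by
  set μ := F.measure.restrict (Ioc a b)
  set ν := G.measure.restrict (Ioc a b)
  have hD : MeasurableSet {p : ℝ × ℝ | p.2 ≤ p.1} :=
    measurableSet_le measurable_snd measurable_fst
  have below : (μ.prod ν).real {p | p.2 ≤ p.1} = ∫ x, ν.real (Iic x) ∂μ := by
    rw [measureReal_def, Measure.prod_apply hD, ← integral_toReal
      (measurable_measure_prodMk_left hD).aemeasurable (ae_of_all _ fun _ => measure_lt_top _ _)]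
    rfl
  have above : (μ.prod ν).real {p | p.2 ≤ p.1}ᶜ = ∫ y, μ.real (Iio y) ∂ν := by
    rw [measureReal_def, Measure.prod_apply_symm hD.compl, ← integral_toReal
      (measurable_measure_prodMk_right hD.compl).aemeasurable
      (ae_of_all _ fun _ => measure_lt_top _ _)]
    congr 1 with y
    congr 2 with x
    simp
  have hbelow :
      ∫ x, ν.real (Iic x) ∂μ = ∫ x in Ioc a b, G x ∂F.measure - (F b - F a) * G a := by
    rw [setIntegral_congr_fun measurableSet_Ioc fun x hx => G.measureReal_restrict_Ioc_Iic hx,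
      integral_sub (G.mono.integrableOn_Ioc _) (integrable_const _), setIntegral_const,
      smul_eq_mul, ← measureReal_restrict_apply_univ, F.measureReal_restrict_Ioc_univ hab]
  have habove : ∫ y, μ.real (Iio y) ∂ν
      = ∫ y in Ioc a b, leftLim F y ∂G.measure - (G b - G a) * F a := by
    rw [setIntegral_congr_fun measurableSet_Ioc fun y hy => F.measureReal_restrict_Ioc_Iio hy,
      integral_sub (F.mono.leftLim.integrableOn_Ioc _) (integrable_const _), setIntegral_const,
      smul_eq_mul, ← measureReal_restrict_apply_univ, G.measureReal_restrict_Ioc_univ hab]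
  have hsquare : (μ.prod ν).real univ = (F b - F a) * (G b - G a) := by
    rw [← univ_prod_univ, measureReal_prod_prod, F.measureReal_restrict_Ioc_univ hab,
      G.measureReal_restrict_Ioc_univ hab]
  have hsplit := measureReal_add_measureReal_compl (μ := μ.prod ν) hD
  rw [below, above, hbelow, habove, hsquare] at hsplit
  linear_combination hsplit

variable {F G}

theorem integral_sub_add_integral_sub {P Q P' Q' : StieltjesFunction ℝ} {f g : ℝ → ℝ}
    (hab : a ≤ b) (hf : Continuous f) (hPQ : ∀ x, P x - Q x = f x)
    (hPQ' : ∀ x, P' x - Q' x = g x) :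
    (∫ x in Ioc a b, g x ∂P.measure - ∫ x in Ioc a b, g x ∂Q.measure)
      + (∫ x in Ioc a b, f x ∂P'.measure - ∫ x in Ioc a b, f x ∂Q'.measure)
      = f b * g b - f a * g a := by
  have hg : ∀ (μ : Measure ℝ) [IsLocallyFiniteMeasure μ],
      ∫ x in Ioc a b, g x ∂μ = ∫ x in Ioc a b, P' x ∂μ - ∫ x in Ioc a b, Q' x ∂μ :=
    fun μ _ => by
    rw [← integral_sub (P'.mono.integrableOn_Ioc μ) (Q'.mono.integrableOn_Ioc μ)]
    simp only [hPQ']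
  have hf' : ∀ (μ : Measure ℝ) [IsLocallyFiniteMeasure μ], ∫ x in Ioc a b, f x ∂μ
      = ∫ x in Ioc a b, leftLim P x ∂μ - ∫ x in Ioc a b, leftLim Q x ∂μ := fun μ _ => by
    rw [← integral_sub (P.mono.leftLim.integrableOn_Ioc μ)
      (Q.mono.leftLim.integrableOn_Ioc μ)]
    simp only [P.mono.leftLim_sub_leftLim Q.mono hf hPQ]
  rw [hg, hg, hf', hf', ← hPQ, ← hPQ, ← hPQ', ← hPQ']
  linear_combination P.integral_Ioc_add_integral_Ioc_leftLim P' hab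
    - P.integral_Ioc_add_integral_Ioc_leftLim Q' hab
    - Q.integral_Ioc_add_integral_Ioc_leftLim P' hab
    + Q.integral_Ioc_add_integral_Ioc_leftLim Q' hab

def signedMeasureSubIcc (P Q : StieltjesFunction ℝ) (a b : ℝ) : SignedMeasure ℝ :=
  (P.measure.restrict (Icc a b)).toSignedMeasure - (Q.measure.restrict (Icc a b)).toSignedMeasure

variable {P Q : StieltjesFunction ℝ}

theorem signedMeasureSubIcc_apply {s : Set ℝ} (hs : MeasurableSet s) :
    signedMeasureSubIcc P Q a b s
      = P.measure.real (s ∩ Icc a b) - Q.measure.real (s ∩ Icc a b) := by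
  rw [signedMeasureSubIcc, Measure.toSignedMeasure_sub_apply hs, measureReal_restrict_apply hs,
    measureReal_restrict_apply hs]

theorem isLS_signedMeasureSubIcc (hab : a ≤ b) {f : ℝ → ℝ} (hf : ContinuousOn f (Icc a b))
    (hPQ : ∀ x, P x - Q x = IccExtend hab ((Icc a b).domRestrict f) x) :
    IsLS a b f (signedMeasureSubIcc P Q a b) := by
  have hPQ' : ∀ x ∈ Icc a b, P x - Q x = f x := fun x hx => by
    rw [hPQ, IccExtend_of_mem _ _ hx, domRestrict_apply]
  refine ⟨fun s hs hdisj => by simp [signedMeasureSubIcc_apply hs, hdisj],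
    fun x y hax hxy hyb => ?_, ?_⟩
  · have hx : x ∈ Icc a b := ⟨hax, hxy.trans hyb⟩
    have hy : y ∈ Icc a b := ⟨hax.trans hxy, hyb⟩
    rw [signedMeasureSubIcc_apply measurableSet_Ioc,
      inter_eq_left.2 (Ioc_subset_Icc_self.trans (Icc_subset_Icc hax hyb)), P.measureReal_Ioc hxy,
      Q.measureReal_Ioc hxy, rLim_eq_of_mem hf hy, rLim_eq_of_mem hf hx, ← hPQ' y hy, ← hPQ' x hx]
    ring
  · have ha : a ∈ Icc a b := left_mem_Icc.2 hab
    -- `P - Q` is constant to the left of `a`, so `d(P - Q)` has no atom at `a`.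
    have hleft := P.mono.leftLim_sub_leftLim Q.mono hf.domRestrict.Icc_extend' hPQ a
    rw [IccExtend_of_mem _ _ ha, domRestrict_apply] at hleft
    rw [signedMeasureSubIcc_apply (measurableSet_singleton a),
      inter_eq_left.2 (singleton_subset_iff.2 ha), P.measureReal_singleton,
      Q.measureReal_singleton, rLim_eq_of_mem hf ha]
    linarith [hPQ' a ha]

theorem sInt_signedMeasureSubIcc (hab : a ≤ b) {g : ℝ → ℝ} (hg : ContinuousOn g (Icc a b)) :
    sInt (signedMeasureSubIcc P Q a b) g (Ioc a b)
      = ∫ x in Ioc a b, IccExtend hab ((Icc a b).domRestrict g) x ∂P.measure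
        - ∫ x in Ioc a b, IccExtend hab ((Icc a b).domRestrict g) x ∂Q.measure := by
  obtain ⟨C, hC⟩ := isCompact_Icc.exists_bound_of_continuousOn hg
  have hext : EqOn g (IccExtend hab ((Icc a b).domRestrict g)) (Ioc a b) := fun x hx =>
    (IccExtend_of_mem hab ((Icc a b).domRestrict g) (Ioc_subset_Icc_self hx)).symm
  rw [sInt_congr_fun measurableSet_Ioc hext, signedMeasureSubIcc,
    sInt_toSignedMeasure_sub _ _ hg.domRestrict.Icc_extend'.measurable
      (fun x => hC _ (projIcc a b hab x).2), Measure.restrict_restrict measurableSet_Ioc,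
    Measure.restrict_restrict measurableSet_Ioc, inter_eq_left.2 Ioc_subset_Icc_self]

end StieltjesFunction

open StieltjesFunction in
theorem stmt3_general (a b : ℝ) (hab : a < b) (lm lp : ℝ → ℝ)
    (hA3 : A3 a b lm lp)
    (fm fp : ℝ → ℝ) (hsol : LuckockSol a b lm lp fm fp) :
    lp b - fm a * lp a = lm a - fp b * lm b := by
  obtain ⟨hlmc, hlpc, hlma, hlpm, -, -⟩ := hA3
  obtain ⟨hfmc, hfpc, hfmbv, hfpbv, hfmb, hfpa, hsol⟩ := hsol
  obtain ⟨Plm, Qlm, hlm⟩ :=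
    hlma.boundedVariationOn_Icc.exists_stieltjesFunction_sub_eq hlmc hab.le
  obtain ⟨Plp, Qlp, hlp⟩ :=
    hlpm.boundedVariationOn_Icc.exists_stieltjesFunction_sub_eq hlpc hab.le
  obtain ⟨Pfm, Qfm, hfm⟩ := hfmbv.exists_stieltjesFunction_sub_eq hfmc hab.le
  obtain ⟨Pfp, Qfp, hfp⟩ := hfpbv.exists_stieltjesFunction_sub_eq hfpc hab.le
  obtain ⟨h₁, h₂⟩ := hsol _ _ _ _ (isLS_signedMeasureSubIcc hab.le hlmc hlm)
    (isLS_signedMeasureSubIcc hab.le hlpc hlp) (isLS_signedMeasureSubIcc hab.le hfmc hfm)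
    (isLS_signedMeasureSubIcc hab.le hfpc hfp) (Ioc a b) measurableSet_Ioc
  rw [sInt_signedMeasureSubIcc hab.le hfmc, sInt_signedMeasureSubIcc hab.le hlmc] at h₁
  rw [sInt_signedMeasureSubIcc hab.le hfpc, sInt_signedMeasureSubIcc hab.le hlpc] at h₂
  have e₁ := integral_sub_add_integral_sub hab.le hlpc.domRestrict.Icc_extend' hlp hfm
  have e₂ := integral_sub_add_integral_sub hab.le hlmc.domRestrict.Icc_extend' hlm hfp
  simp only [IccExtend_left, IccExtend_right, domRestrict_apply, hfmb, hfpa] at e₁ e₂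
  linarith

/-- under (A3) and (A6), the unique solution `(fm, fp)` of Luckock's
equation satisfies `λ₊(I₊) − fm(I₋)·λ₊(I₋) = λ₋(I₋) − fp(I₊)·λ₋(I₊)`. -/
theorem stmt3 (a b : ℝ) (hab : a < b) (lm lp : ℝ → ℝ)
    (hA3 : A3 a b lm lp) (hA6 : A6 a b lm lp)
    (fm fp : ℝ → ℝ) (hsol : LuckockSol a b lm lp fm fp) :
    lp b - fm a * lp a = lm a - fp b * lm b :=
  stmt3_general a b hab lm lp hA3 fm fp hsol
end
end

section
/- Assume (A3) and (A6). For each pair (g₋, g₊), with g₋ : Ī → ℝ bounded, left-continuous and of bounded variation and g₊ : Ī → ℝ bounded, right-continuous and of bounded variation, there exist a unique pair of bounded weight functions (w₋, w₊), with w₋ left-continuous of bounded variation, w₊ right-continuous of bounded variation, and w₋(I₋) = 0 = w₊(I₊), and a unique constant c ∈ ℝ, such that the associated linear functional F satisfies GF(X) = g₋(M₋(X)) + g₊(M₊(X)) − c for every configuration X. -/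
open MeasureTheory Set
open scoped ENNReal

noncomputable section

/-- The state of the order book: the multiset of buy limit order prices and the
multiset of sell limit order prices. -/
structure OrderBook where
  minus : Multiset ℝ
  plus : Multiset ℝ

/-- A valid configuration on the interval `(a,b)`: all orders have prices in `(a,b)`
and every buy order is strictly below every sell order. -/
def IsConfig (a b : ℝ) (X : OrderBook) : Prop :=
  (∀ x ∈ X.minus, x ∈ Set.Ioo a b) ∧ (∀ x ∈ X.plus, x ∈ Set.Ioo a b) ∧
  ∀ x ∈ X.minus, ∀ y ∈ X.plus, x < y

/-- The best (highest) buy offer, `a` if there are no buy limit orders. -/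
def Mminus (a : ℝ) (X : OrderBook) : ℝ := sSup (insert a {x | x ∈ X.minus})

/-- The best (lowest) sell offer, `b` if there are no sell limit orders. -/
def Mplus (b : ℝ) (X : OrderBook) : ℝ := sInf (insert b {x | x ∈ X.plus})

open scoped Classical in
/-- The Luckock map for a buy order at price level `u` (`u = b` is a buy market order). -/
def Lminus (a b u : ℝ) (X : OrderBook) : OrderBook :=
  if X.plus ≠ 0 ∧ Mplus b X ≤ u then ⟨X.minus, X.plus.erase (Mplus b X)⟩
  else if u ∈ Set.Ioo a b then ⟨u ::ₘ X.minus, X.plus⟩ else X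

open scoped Classical in
/-- The Luckock map for a sell order at price level `u` (`u = a` is a sell market order). -/
def Lplus (a b u : ℝ) (X : OrderBook) : OrderBook :=
  if X.minus ≠ 0 ∧ u ≤ Mminus a X then ⟨X.minus.erase (Mminus a X), X.plus⟩
  else if u ∈ Set.Ioo a b then ⟨X.minus, u ::ₘ X.plus⟩ else X

/-- The linear functional associated with the weight functions `wm, wp`. -/
def linF (wm wp : ℝ → ℝ) (X : OrderBook) : ℝ :=
  (X.minus.map wm).sum + (X.plus.map wp).sum

/-- The generator of the Stigler-Luckock model with arrival measures `μm, μp`. -/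
def genOp (a b : ℝ) (μm μp : MeasureTheory.Measure ℝ) (F : OrderBook → ℝ)
    (X : OrderBook) : ℝ :=
  (∫ u, (F (Lminus a b u X) - F X) ∂μm) + ∫ u, (F (Lplus a b u X) - F X) ∂μp

/-- `μm` is the arrival measure of buy orders: `μm [x, b] = lm x`, supported on `[a,b]`. -/
def IsMuMinus (a b : ℝ) (lm : ℝ → ℝ) (μm : MeasureTheory.Measure ℝ) : Prop :=
  (∀ x ∈ Set.Icc a b, μm (Set.Icc x b) = ENNReal.ofReal (lm x)) ∧
  μm (Set.Icc a b)ᶜ = 0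

/-- `μp` is the arrival measure of sell orders: `μp [a, x] = lp x`, supported on `[a,b]`. -/
def IsMuPlus (a b : ℝ) (lp : ℝ → ℝ) (μp : MeasureTheory.Measure ℝ) : Prop :=
  (∀ x ∈ Set.Icc a b, μp (Set.Icc a x) = ENNReal.ofReal (lp x)) ∧
  μp (Set.Icc a b)ᶜ = 0

/-- An admissible pair of weight functions: bounded, of bounded variation, `wm`
left-continuous, `wp` right-continuous, with `wm a = 0` and `wp b = 0`. -/
def WPair (a b : ℝ) (wm wp : ℝ → ℝ) : Prop :=
  (∃ C, ∀ x ∈ Set.Icc a b, |wm x| ≤ C) ∧ (∃ C, ∀ x ∈ Set.Icc a b, |wp x| ≤ C) ∧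
  BoundedVariationOn wm (Set.Icc a b) ∧ BoundedVariationOn wp (Set.Icc a b) ∧
  (∀ x ∈ Set.Ioc a b, ContinuousWithinAt wm (Set.Iio x) x) ∧
  (∀ x ∈ Set.Ico a b, ContinuousWithinAt wp (Set.Ioi x) x) ∧
  wm a = 0 ∧ wp b = 0

/-!
A Luckock map either removes the best opposite offer or inserts one order, so with `m = M₋(X)`,
`q = M₊(X)` and the normalisation `w₋(a) = 0 = w₊(b)`, which absorbs the orders placed at `a, b`,
`GF(X) = ∫_{u < q} w₋ dμ₋ - w₊(q) λ₋(q) + ∫_{u > m} w₊ dμ₊ - w₋(m) λ₊(m)`.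
Testing the identity on the empty book and on books holding one order shows that it is
equivalent to the coupled equations
`w₋(m) λ₊(m) + ∫_{(a, m]} w₊ dμ₊ = g₋(a) - g₋(m)`,
`w₊(q) λ₋(q) + ∫_{[q, b)} w₋ dμ₋ = g₊(b) - g₊(q)`
on `[a, b]` (at `m = b` and `q = a` by one-sided continuity), with `c` read off the empty book.
As `μ₊ (a, m] = λ₊(m) - λ₊(a)`, solving the first equation for `w₋` is a sup-norm contraction of
ratio at most `1 - λ₊(a) / λ₊(b) < 1` by (A6), and similarly for the second; Banach's fixed point
theorem for the composite map on bounded measurable functions gives existence and uniqueness.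
The regularity of the solution is read off the explicit formula.
-/

open Filter Topology
open scoped UniformConvergence

open UniformFun in
/-- Banach's fixed point theorem in `α →ᵤ ℝ`, whose `edist` is the sup distance: `P` cuts out a
closed set on which this distance is finite. -/
theorem exists_unique_fixedPoint_of_abs_sub_le {α : Type*} {P : (α → ℝ) → Prop}
    {T : (α → ℝ) → α → ℝ} {K : ℝ} (hK₀ : 0 ≤ K) (hK₁ : K < 1)
    (hP : ∀ (u : ℕ → α → ℝ) f, (∀ n, P (u n)) → TendstoUniformly u f atTop → P f)
    (hbdd : ∀ w, P w → ∃ C, ∀ x, |w x| ≤ C) (hT : ∀ w, P w → P (T w))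
    (hTK : ∀ v w, P v → P w → ∀ D, (∀ x, |v x - w x| ≤ D) → ∀ x, |T v x - T w x| ≤ K * D)
    {w₀ : α → ℝ} (hw₀ : P w₀) :
    ∃! w, P w ∧ T w = w := by
  set s : Set (α →ᵤ ℝ) := {w | P (toFun w)}
  set F : (α →ᵤ ℝ) → α →ᵤ ℝ := fun w => ofFun (T (toFun w))
  have hF : MapsTo F s s := fun w hw => hT _ hw
  have hs : IsComplete s := by
    refine IsSeqClosed.isClosed (fun u f hu hlim => ?_) |>.isComplete
    exact hP (fun n => toFun (u n)) (toFun f) hu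
      (UniformFun.tendsto_iff_tendstoUniformly.1 hlim)
  have hfin : ∀ v ∈ s, ∀ w ∈ s, edist v w ≠ ⊤ := by
    intro v hv w hw
    obtain ⟨C, hC⟩ := hbdd _ hv
    obtain ⟨C', hC'⟩ := hbdd _ hw
    refine ne_top_of_le_ne_top (ENNReal.ofReal_ne_top (r := C + C'))
      (UniformFun.edist_le.2 fun x => ?_)
    rw [edist_dist, Real.dist_eq]
    exact ENNReal.ofReal_le_ofReal ((abs_sub _ _).trans (add_le_add (hC x) (hC' x)))
  have hcontr : ContractingWith K.toNNReal (hF.restrict F s s) := by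
    refine ⟨by simpa using hK₁, fun v w => ?_⟩
    show edist (F v) (F w) ≤ ENNReal.ofReal K * edist (v : α →ᵤ ℝ) w
    set D := (edist (v : α →ᵤ ℝ) w).toReal
    have hD : ∀ x, |toFun (v : α →ᵤ ℝ) x - toFun (w : α →ᵤ ℝ) x| ≤ D := fun x => by
      rw [← Real.dist_eq, dist_edist]
      exact ENNReal.toReal_mono (hfin _ v.2 _ w.2) UniformFun.edist_eval_le
    refine UniformFun.edist_le.2 fun x => ?_
    rw [edist_dist, Real.dist_eq, ← ENNReal.ofReal_toReal (hfin _ v.2 _ w.2),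
      ← ENNReal.ofReal_mul hK₀]
    exact ENNReal.ofReal_le_ofReal (hTK _ _ v.2 w.2 D hD x)
  obtain ⟨w, hw, hfix, -⟩ := hcontr.exists_fixedPoint' hs hF (x := ofFun w₀) hw₀
    (hfin _ hw₀ _ (hF hw₀))
  refine ⟨toFun w, ⟨hw, congrArg toFun hfix⟩, fun v ⟨hv, hvfix⟩ => ?_⟩
  have := hcontr.eq_or_edist_eq_top_of_fixedPoints (x := ⟨ofFun v, hv⟩) (y := ⟨w, hw⟩)
    (Subtype.ext (congrArg ofFun hvfix)) (Subtype.ext hfix)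
  rcases this with h | h
  · exact congrArg (fun z : s => toFun (z : α →ᵤ ℝ)) h
  · exact absurd h (hfin _ hv _ hw)

section BoundedVariation

variable {α : Type*} [LinearOrder α]

theorem eVariationOn_le_mul_of_edist_le {E F : Type*} [PseudoEMetricSpace E]
    [PseudoEMetricSpace F] {f : α → E} {g : α → F} {s : Set α} {C : ℝ≥0∞}
    (h : ∀ x ∈ s, ∀ y ∈ s, edist (f x) (f y) ≤ C * edist (g x) (g y)) :
    eVariationOn f s ≤ C * eVariationOn g s := by
  refine iSup_le fun ⟨n, u, hu, us⟩ => ?_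
  calc ∑ i ∈ Finset.range n, edist (f (u (i + 1))) (f (u i))
      ≤ ∑ i ∈ Finset.range n, C * edist (g (u (i + 1))) (g (u i)) :=
        Finset.sum_le_sum fun i _ => h _ (us _) _ (us _)
    _ = C * ∑ i ∈ Finset.range n, edist (g (u (i + 1))) (g (u i)) := by rw [Finset.mul_sum]
    _ ≤ C * eVariationOn g s := by gcongr; exact eVariationOn.sum_le hu us

theorem BoundedVariationOn.of_abs_sub_le {f g : α → ℝ} {s : Set α} {C : ℝ}
    (hg : BoundedVariationOn g s) (h : ∀ x ∈ s, ∀ y ∈ s, |f x - f y| ≤ C * |g x - g y|) :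
    BoundedVariationOn f s := by
  refine ne_top_of_le_ne_top (ENNReal.mul_ne_top (ENNReal.ofReal_ne_top (r := C)) hg)
    (eVariationOn_le_mul_of_edist_le fun x hx y hy => ?_)
  rw [edist_dist, edist_dist, Real.dist_eq, Real.dist_eq, ← ENNReal.ofReal_mul' (abs_nonneg _)]
  exact ENNReal.ofReal_le_ofReal (h x hx y hy)

theorem BoundedVariationOn.sub {f g : α → ℝ} {s : Set α} (hf : BoundedVariationOn f s)
    (hg : BoundedVariationOn g s) : BoundedVariationOn (f - g) s := by
  refine ne_top_of_le_ne_top (ENNReal.add_ne_top.2 ⟨hf, hg⟩) (iSup_le fun ⟨n, u, hu, us⟩ => ?_)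
  calc ∑ i ∈ Finset.range n, edist ((f - g) (u (i + 1))) ((f - g) (u i))
      ≤ ∑ i ∈ Finset.range n,
          (edist (f (u (i + 1))) (f (u i)) + edist (g (u (i + 1))) (g (u i))) :=
        Finset.sum_le_sum fun i _ => by
          simp only [edist_dist, Pi.sub_apply, ← ENNReal.ofReal_add dist_nonneg dist_nonneg]
          exact ENNReal.ofReal_le_ofReal (dist_sub_sub_le _ _ _ _)
    _ ≤ eVariationOn f s + eVariationOn g s := by
      rw [Finset.sum_add_distrib]
      exact add_le_add (eVariationOn.sum_le hu us) (eVariationOn.sum_le hu us)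

theorem BoundedVariationOn.exists_abs_le {f : α → ℝ} {s : Set α}
    (hf : BoundedVariationOn f s) : ∃ C, ∀ x ∈ s, |f x| ≤ C := by
  rcases s.eq_empty_or_nonempty with rfl | ⟨x₀, hx₀⟩
  · exact ⟨0, by simp⟩
  refine ⟨|f x₀| + (eVariationOn f s).toReal, fun x hx => ?_⟩
  have := hf.dist_le hx hx₀
  rw [Real.dist_eq] at this
  linarith [abs_sub_abs_le_abs_sub (f x) (f x₀)]

theorem BoundedVariationOn.const_sub {f : α → ℝ} {s : Set α} (hf : BoundedVariationOn f s)
    (c : ℝ) : BoundedVariationOn (fun x => c - f x) s :=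
  hf.of_abs_sub_le (C := 1) fun x _ y _ => by rw [one_mul, sub_sub_sub_cancel_left, abs_sub_comm]

end BoundedVariation

theorem BoundedVariationOn.measurable_comp_projIcc {f : ℝ → ℝ} {a b : ℝ} (hab : a ≤ b)
    (hf : BoundedVariationOn f (Icc a b)) : Measurable fun x => f (projIcc a b hab x) := by
  obtain ⟨p, q, hp, hq, rfl⟩ := hf.locallyBoundedVariationOn.exists_monotoneOn_sub_monotoneOn
  have hmono {r : ℝ → ℝ} (hr : MonotoneOn r (Icc a b)) : Monotone fun x => r (projIcc a b hab x) :=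
    fun x y hxy => hr (projIcc a b hab x).2 (projIcc a b hab y).2 (monotone_projIcc hab hxy)
  exact (hmono hp).measurable.sub (hmono hq).measurable

theorem eqOn_comp_projIcc {a b : ℝ} (hab : a ≤ b) (f : ℝ → ℝ) :
    EqOn (fun x => f (projIcc a b hab x)) f (Icc a b) := fun x hx => by
  simp [projIcc_of_mem hab hx]

theorem continuousWithinAt_of_abs_sub_le {X : Type*} [TopologicalSpace X] {f g : X → ℝ}
    {s : Set X} {x : X} {C : ℝ} (hg : ContinuousWithinAt g s x)
    (h : ∀ y ∈ s, |f y - f x| ≤ C * |g y - g x|) : ContinuousWithinAt f s x := by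
  have hlim : Tendsto (fun y => C * |g y - g x|) (𝓝[s] x) (𝓝 0) := by
    simpa using ((hg.sub_const (g x)).abs).const_mul C
  refine tendsto_iff_dist_tendsto_zero.2 (squeeze_zero' (Eventually.of_forall fun _ => dist_nonneg)
    ?_ hlim)
  filter_upwards [self_mem_nhdsWithin] with y hy
  rw [Real.dist_eq]
  exact h y hy

theorem BoundedVariationOn.integrable {a b : ℝ} {f : ℝ → ℝ} {μ : Measure ℝ} [IsFiniteMeasure μ]
    (hab : a ≤ b) (hμ : ∀ᵐ x ∂μ, x ∈ Icc a b) (hf : BoundedVariationOn f (Icc a b)) :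
    Integrable f μ := by
  obtain ⟨C, hC⟩ := hf.exists_abs_le
  refine Integrable.of_bound ((hf.measurable_comp_projIcc hab).aestronglyMeasurable.congr ?_) C
    (hμ.mono fun x hx => hC x hx)
  exact hμ.mono fun x hx => by simp [projIcc_of_mem hab hx]

theorem integral_ite_le {μ : Measure ℝ} {f : ℝ → ℝ} [IsFiniteMeasure μ] (hf : Integrable f μ)
    (t c : ℝ) : ∫ u, (if t ≤ u then c else f u) ∂μ = c * μ.real (Ici t) + ∫ u in Iio t, f u ∂μ := by
  have hint : Integrable (fun u => if t ≤ u then c else f u) μ :=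
    Integrable.piecewise (s := Ici t) (f := fun _ => c) measurableSet_Ici
      (integrable_const c).integrableOn hf.integrableOn
  rw [← integral_add_compl measurableSet_Ici hint, compl_Ici,
    setIntegral_congr_fun measurableSet_Ici fun u (hu : t ≤ u) => if_pos hu,
    setIntegral_congr_fun measurableSet_Iio fun u (hu : u < t) => if_neg (not_le.2 hu),
    setIntegral_const, smul_eq_mul, mul_comm]

theorem integral_le_ite {μ : Measure ℝ} {f : ℝ → ℝ} [IsFiniteMeasure μ] (hf : Integrable f μ)
    (t c : ℝ) : ∫ u, (if u ≤ t then c else f u) ∂μ = c * μ.real (Iic t) + ∫ u in Ioi t, f u ∂μ := by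
  have hint : Integrable (fun u => if u ≤ t then c else f u) μ :=
    Integrable.piecewise (s := Iic t) (f := fun _ => c) measurableSet_Iic
      (integrable_const c).integrableOn hf.integrableOn
  rw [← integral_add_compl measurableSet_Iic hint, compl_Iic,
    setIntegral_congr_fun measurableSet_Iic fun u (hu : u ≤ t) => if_pos hu,
    setIntegral_congr_fun measurableSet_Ioi fun u (hu : t < u) => if_neg (not_le.2 hu),
    setIntegral_const, smul_eq_mul, mul_comm]

theorem setIntegral_Ioi_eq_add {μ : Measure ℝ} {f : ℝ → ℝ} {a y : ℝ} (hf : Integrable f μ)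
    (hay : a ≤ y) : ∫ x in Ioi a, f x ∂μ = ∫ x in Ioc a y, f x ∂μ + ∫ x in Ioi y, f x ∂μ := by
  rw [← setIntegral_union ((Iic_disjoint_Ioi le_rfl).mono_left Ioc_subset_Iic_self)
    measurableSet_Ioi hf.integrableOn hf.integrableOn, Ioc_union_Ioi_eq_Ioi hay]

theorem setIntegral_Iio_eq_add {μ : Measure ℝ} {f : ℝ → ℝ} {y b : ℝ} (hf : Integrable f μ)
    (hyb : y ≤ b) : ∫ x in Iio b, f x ∂μ = ∫ x in Iio y, f x ∂μ + ∫ x in Ico y b, f x ∂μ := by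
  rw [← setIntegral_union ((Iio_disjoint_Ici le_rfl).mono_right Ico_subset_Ici_self)
    measurableSet_Ico hf.integrableOn hf.integrableOn, Iio_union_Ico_eq_Iio hyb]

def IsBoundedMeasurable (w : ℝ → ℝ) : Prop := Measurable w ∧ ∃ C, ∀ x, |w x| ≤ C

theorem IsBoundedMeasurable.of_tendstoUniformly {u : ℕ → ℝ → ℝ} {f : ℝ → ℝ}
    (hu : ∀ n, IsBoundedMeasurable (u n)) (hf : TendstoUniformly u f atTop) :
    IsBoundedMeasurable f := by
  refine ⟨measurable_of_tendsto_metrizable (fun n => (hu n).1)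
    (tendsto_pi_nhds.2 hf.tendsto_at), ?_⟩
  obtain ⟨N, hN⟩ := (Metric.tendstoUniformly_iff.1 hf 1 one_pos).exists
  obtain ⟨C, hC⟩ := (hu N).2
  refine ⟨C + 1, fun x => ?_⟩
  have := hN x
  rw [Real.dist_eq] at this
  linarith [abs_sub_abs_le_abs_sub (f x) (u N x), hC x]

theorem IsBoundedMeasurable.integrable {w : ℝ → ℝ} (hw : IsBoundedMeasurable w)
    (μ : Measure ℝ) [IsFiniteMeasure μ] : Integrable w μ := by
  obtain ⟨hm, C, hC⟩ := hw
  exact Integrable.of_bound hm.aestronglyMeasurable C (Eventually.of_forall hC)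

/-- The two instances are `S y = (a, y]`, `μ = μ₊`, `L = λ₊`, `L₀ = λ₊(a)` and
`S y = [y, b)`, `μ = μ₋`, `L = λ₋`, `L₀ = λ₋(b)`. -/
structure IsCumulative (a b : ℝ) (μ : Measure ℝ) (S : ℝ → Set ℝ) (L : ℝ → ℝ) (L₀ : ℝ) :
    Prop where
  measurableSet (y : ℝ) : MeasurableSet (S y)
  monotoneOn_or_antitoneOn : MonotoneOn S (Icc a b) ∨ AntitoneOn S (Icc a b)
  subset_Icc {y : ℝ} : y ∈ Icc a b → S y ⊆ Icc a b
  eq_add_measureReal {y : ℝ} : y ∈ Icc a b → L y = L₀ + μ.real (S y)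
  continuousOn : ContinuousOn L (Icc a b)
  pos : 0 < L₀

namespace IsCumulative

variable {a b L₀ C x y : ℝ} {μ : Measure ℝ} {S : ℝ → Set ℝ} {L v : ℝ → ℝ}

theorem subset_or_subset (h : IsCumulative a b μ S L L₀) (hx : x ∈ Icc a b)
    (hy : y ∈ Icc a b) : S x ⊆ S y ∨ S y ⊆ S x := by
  rcases h.monotoneOn_or_antitoneOn with hS | hS <;> rcases le_total x y with hxy | hxy
  exacts [.inl (hS hx hy hxy), .inr (hS hy hx hxy), .inr (hS hx hy hxy), .inl (hS hy hx hxy)]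

theorem le_of_mem (h : IsCumulative a b μ S L L₀) (hy : y ∈ Icc a b) : L₀ ≤ L y := by
  rw [h.eq_add_measureReal hy]
  exact le_add_of_nonneg_right measureReal_nonneg

theorem pos_of_mem (h : IsCumulative a b μ S L L₀) (hy : y ∈ Icc a b) : 0 < L y :=
  h.pos.trans_le (h.le_of_mem hy)

variable [IsFiniteMeasure μ]

theorem le_add_measureReal_univ (h : IsCumulative a b μ S L L₀) (hy : y ∈ Icc a b) :
    L y ≤ L₀ + μ.real univ := by
  rw [h.eq_add_measureReal hy]
  exact add_le_add le_rfl (measureReal_mono (subset_univ _))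

theorem boundedVariationOn (h : IsCumulative a b μ S L L₀) :
    BoundedVariationOn L (Icc a b) := by
  have hbound : ∀ y ∈ Icc a b, |L y| ≤ L₀ + μ.real univ := fun y hy => by
    rw [abs_of_pos (h.pos_of_mem hy)]
    exact h.le_add_measureReal_univ hy
  rcases h.monotoneOn_or_antitoneOn with hS | hS
  · refine MonotoneOn.boundedVariationOn (fun x hx y hy hxy => ?_) hbound
    rw [h.eq_add_measureReal hx, h.eq_add_measureReal hy]
    exact add_le_add le_rfl (measureReal_mono (μ := μ) (hS hx hy hxy))
  · have hneg : MonotoneOn (fun y => -L y) (Icc a b) := fun x hx y hy hxy => by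
      rw [neg_le_neg_iff, h.eq_add_measureReal hx, h.eq_add_measureReal hy]
      exact add_le_add le_rfl (measureReal_mono (μ := μ) (hS hx hy hxy))
    refine (hneg.boundedVariationOn (C := L₀ + μ.real univ) fun y hy => ?_).of_abs_sub_le
      (C := 1) fun x _ y _ => ?_
    · rw [abs_neg]; exact hbound y hy
    · rw [one_mul, neg_sub_neg, abs_sub_comm]

theorem boundedVariationOn_inv (h : IsCumulative a b μ S L L₀) :
    BoundedVariationOn (fun y => (L y)⁻¹) (Icc a b) := by
  refine h.boundedVariationOn.of_abs_sub_le (C := (L₀ ^ 2)⁻¹) fun x hx y hy => ?_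
  have hLx := h.pos_of_mem hx
  have hLy := h.pos_of_mem hy
  rw [inv_sub_inv hLx.ne' hLy.ne', abs_div, abs_of_pos (mul_pos hLx hLy), abs_sub_comm,
    div_eq_inv_mul]
  gcongr ?_ * _
  exact inv_anti₀ (pow_pos h.pos 2)
    (by rw [sq]; exact mul_le_mul (h.le_of_mem hx) (h.le_of_mem hy) h.pos.le hLx.le)

theorem abs_setIntegral_sub_le (h : IsCumulative a b μ S L L₀) (hv : Integrable v μ)
    (hC : ∀ t ∈ Icc a b, |v t| ≤ C) (hx : x ∈ Icc a b) (hy : y ∈ Icc a b) :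
    |∫ t in S x, v t ∂μ - ∫ t in S y, v t ∂μ| ≤ C * |L x - L y| := by
  wlog hyx : S y ⊆ S x generalizing x y
  · rcases h.subset_or_subset hx hy with hxy | hxy
    · rw [abs_sub_comm, abs_sub_comm (L x)]
      exact this hy hx hxy
    · exact absurd hxy hyx
  rw [← setIntegral_sdiff (h.measurableSet y) hv.integrableOn hyx, h.eq_add_measureReal hx,
    h.eq_add_measureReal hy, add_sub_add_left_eq_sub,
    ← measureReal_sdiff hyx (h.measurableSet y), abs_of_nonneg measureReal_nonneg]
  exact norm_setIntegral_le_of_norm_le_const (measure_lt_top μ _)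
    fun t (ht : t ∈ S x \ S y) => (Real.norm_eq_abs _).trans_le (hC t (h.subset_Icc hx ht.1))

theorem continuousOn_setIntegral (h : IsCumulative a b μ S L L₀) (hv : Integrable v μ)
    (hC : ∀ t ∈ Icc a b, |v t| ≤ C) : ContinuousOn (fun y => ∫ t in S y, v t ∂μ) (Icc a b) :=
  fun x hx => continuousWithinAt_of_abs_sub_le (h.continuousOn x hx)
    fun _ hy => h.abs_setIntegral_sub_le hv hC hy hx

theorem boundedVariationOn_setIntegral (h : IsCumulative a b μ S L L₀) (hv : Integrable v μ)
    (hC : ∀ t ∈ Icc a b, |v t| ≤ C) :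
    BoundedVariationOn (fun y => ∫ t in S y, v t ∂μ) (Icc a b) :=
  h.boundedVariationOn.of_abs_sub_le fun _ hx _ hy => h.abs_setIntegral_sub_le hv hC hx hy

theorem mul_add_setIntegral_eq {e : ℝ} {w G : ℝ → ℝ} (h : IsCumulative a b μ S L L₀)
    (hab : a < b) (hv : Integrable v μ) (hC : ∀ t ∈ Icc a b, |v t| ≤ C) (he : e ∈ Icc a b)
    (hw : ContinuousWithinAt w (Ioo a b) e) (hG : ContinuousWithinAt G (Ioo a b) e)
    (heq : ∀ y ∈ Ioo a b, w y * L y + ∫ t in S y, v t ∂μ = G y) :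
    w e * L e + ∫ t in S e, v t ∂μ = G e := by
  have hF : ContinuousWithinAt (fun y => w y * L y + ∫ t in S y, v t ∂μ) (Ioo a b) e :=
    (hw.mul ((h.continuousOn e he).mono Ioo_subset_Icc_self)).add
      ((h.continuousOn_setIntegral hv hC e he).mono Ioo_subset_Icc_self)
  have : (𝓝[Ioo a b] e).NeBot :=
    mem_closure_iff_nhdsWithin_neBot.1 (by rwa [closure_Ioo hab.ne])
  exact tendsto_nhds_unique hF (hG.congr' (eventuallyEq_nhdsWithin_of_eqOn heq).symm)

end IsCumulative

/-- Solves `w y * L y + ∫_{S y} v dμ = G y` for `w` on `[a, b]`; the value at `x ∉ [a, b]` is the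
one at the nearest endpoint, which keeps the output measurable whatever `G` does off `[a, b]`. -/
def weightOp {a b : ℝ} (hab : a ≤ b) (μ : Measure ℝ) (S : ℝ → Set ℝ) (L G v : ℝ → ℝ)
    (x : ℝ) : ℝ :=
  (G (projIcc a b hab x) - ∫ t in S (projIcc a b hab x), v t ∂μ) / L (projIcc a b hab x)

section WeightOp

variable {a b L₀ C : ℝ} {hab : a ≤ b} {μ : Measure ℝ} {S : ℝ → Set ℝ} {L G v w : ℝ → ℝ}
  {x : ℝ}

theorem weightOp_of_mem (hx : x ∈ Icc a b) :
    weightOp hab μ S L G v x = (G x - ∫ t in S x, v t ∂μ) / L x := by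
  simp [weightOp, projIcc_of_mem hab hx]

theorem weightOp_projIcc :
    weightOp hab μ S L G v (projIcc a b hab x) = weightOp hab μ S L G v x := by
  simp [weightOp]

theorem eqOn_weightOp_iff (h : IsCumulative a b μ S L L₀) :
    EqOn w (weightOp hab μ S L G v) (Icc a b) ↔
      ∀ y ∈ Icc a b, w y * L y + ∫ t in S y, v t ∂μ = G y := by
  refine forall₂_congr fun y hy => ?_
  rw [weightOp_of_mem hy, eq_div_iff (h.pos_of_mem hy).ne', eq_sub_iff_add_eq]

theorem weightOp_congr (h : IsCumulative a b μ S L L₀) (hvw : EqOn v w (Icc a b)) :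
    weightOp hab μ S L G v = weightOp hab μ S L G w := by
  ext x
  simp only [weightOp]
  congr 2
  exact setIntegral_congr_fun (h.measurableSet _)
    fun t ht => hvw (h.subset_Icc (projIcc a b hab x).2 ht)

theorem comp_projIcc_eq_weightOp (hw : EqOn w (weightOp hab μ S L G v) (Icc a b)) :
    (fun x => w (projIcc a b hab x)) = weightOp hab μ S L G v := by
  ext x
  rw [hw (projIcc a b hab x).2, weightOp_projIcc]

variable [IsFiniteMeasure μ]

theorem measurable_weightOp (h : IsCumulative a b μ S L L₀) (hG : BoundedVariationOn G (Icc a b))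
    (hv : Integrable v μ) (hC : ∀ t ∈ Icc a b, |v t| ≤ C) :
    Measurable (weightOp hab μ S L G v) := by
  have hproj : Continuous fun x => (projIcc a b hab x : ℝ) :=
    continuous_subtype_val.comp continuous_projIcc
  have hJ := (h.continuousOn_setIntegral hv hC).comp_continuous hproj fun x => (projIcc a b hab x).2
  have hL := h.continuousOn.comp_continuous hproj fun x => (projIcc a b hab x).2
  exact ((hG.measurable_comp_projIcc hab).sub hJ.measurable).div hL.measurable

theorem abs_weightOp_le (h : IsCumulative a b μ S L L₀) {C' : ℝ}
    (hG : ∀ y ∈ Icc a b, |G y| ≤ C') (hC : ∀ t ∈ Icc a b, |v t| ≤ C) (x : ℝ) :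
    |weightOp hab μ S L G v x| ≤ (C' + C * μ.real univ) / L₀ := by
  rw [← weightOp_projIcc]
  obtain ⟨y, hy⟩ := projIcc a b hab x
  have ha : a ∈ Icc a b := left_mem_Icc.2 hab
  have hC₀ : 0 ≤ C := (abs_nonneg _).trans (hC a ha)
  have hJ : |∫ t in S y, v t ∂μ| ≤ C * μ.real univ :=
    (norm_setIntegral_le_of_norm_le_const (measure_lt_top μ _)
      fun t ht => (Real.norm_eq_abs _).trans_le (hC t (h.subset_Icc hy ht))).trans
      (mul_le_mul_of_nonneg_left (measureReal_mono (subset_univ _)) hC₀)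
  change |weightOp hab μ S L G v y| ≤ _
  rw [weightOp_of_mem hy, abs_div, abs_of_pos (h.pos_of_mem hy)]
  calc |G y - ∫ t in S y, v t ∂μ| / L y ≤ (C' + C * μ.real univ) / L y :=
        div_le_div_of_nonneg_right ((abs_sub _ _).trans (add_le_add (hG y hy) hJ))
          (h.pos_of_mem hy).le
    _ ≤ (C' + C * μ.real univ) / L₀ := by
        have : 0 ≤ C' := (abs_nonneg _).trans (hG a ha)
        gcongr
        exacts [h.pos, h.le_of_mem hy]

theorem abs_weightOp_sub_le (h : IsCumulative a b μ S L L₀) (hv : Integrable v μ)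
    (hw : Integrable w μ) {D : ℝ} (hD : ∀ t ∈ Icc a b, |v t - w t| ≤ D) (x : ℝ) :
    |weightOp hab μ S L G v x - weightOp hab μ S L G w x| ≤
      (1 - L₀ / (L₀ + μ.real univ)) * D := by
  rw [← weightOp_projIcc, ← weightOp_projIcc (v := w)]
  obtain ⟨y, hy⟩ := projIcc a b hab x
  have hLy := h.pos_of_mem hy
  have hD₀ : 0 ≤ D := (abs_nonneg _).trans (hD a (left_mem_Icc.2 hab))
  have hJ : |∫ t in S y, (v t - w t) ∂μ| ≤ D * (L y - L₀) := by
    rw [h.eq_add_measureReal hy, add_sub_cancel_left]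
    exact norm_setIntegral_le_of_norm_le_const (measure_lt_top μ _)
      fun t ht => (Real.norm_eq_abs _).trans_le (hD t (h.subset_Icc hy ht))
  have hL₁ := h.le_add_measureReal_univ hy
  change |weightOp hab μ S L G v y - weightOp hab μ S L G w y| ≤ _
  rw [weightOp_of_mem hy, weightOp_of_mem hy]
  calc |(G y - ∫ t in S y, v t ∂μ) / L y - (G y - ∫ t in S y, w t ∂μ) / L y|
      = |∫ t in S y, (v t - w t) ∂μ| / L y := by
        rw [integral_sub hv.integrableOn hw.integrableOn, ← sub_div, abs_div, abs_of_pos hLy,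
          ← abs_neg]
        ring_nf
    _ ≤ D * (L y - L₀) / L y := by gcongr
    _ = (1 - L₀ / L y) * D := by field_simp
    _ ≤ (1 - L₀ / (L₀ + μ.real univ)) * D := by
        gcongr
        exact h.pos.le

theorem boundedVariationOn_weightOp (h : IsCumulative a b μ S L L₀)
    (hG : BoundedVariationOn G (Icc a b)) (hv : Integrable v μ) (hC : ∀ t ∈ Icc a b, |v t| ≤ C) :
    BoundedVariationOn (weightOp hab μ S L G v) (Icc a b) := by
  have := (hG.sub (h.boundedVariationOn_setIntegral hv hC)).mul h.boundedVariationOn_inv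
  rwa [BoundedVariationOn, ← eVariationOn.eq_of_eqOn fun _ hy => ?_]
  simp [weightOp_of_mem hy, div_eq_mul_inv]

theorem continuousWithinAt_weightOp (h : IsCumulative a b μ S L L₀) {s : Set ℝ}
    (hs : s ⊆ Icc a b) (hx : x ∈ Icc a b) (hG : ContinuousWithinAt G s x) (hv : Integrable v μ)
    (hC : ∀ t ∈ Icc a b, |v t| ≤ C) : ContinuousWithinAt (weightOp hab μ S L G v) s x :=
  ((hG.sub ((h.continuousOn_setIntegral hv hC x hx).mono hs)).div
    ((h.continuousOn x hx).mono hs) (h.pos_of_mem hx).ne').congr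
    (fun _ hy => weightOp_of_mem (hs hy)) (weightOp_of_mem hx)

theorem isBoundedMeasurable_weightOp (h : IsCumulative a b μ S L L₀)
    (hG : BoundedVariationOn G (Icc a b)) (hv : Integrable v μ) (hC : ∀ t ∈ Icc a b, |v t| ≤ C) :
    IsBoundedMeasurable (weightOp hab μ S L G v) := by
  obtain ⟨C', hC'⟩ := hG.exists_abs_le
  exact ⟨measurable_weightOp h hG hv hC, _, abs_weightOp_le h hC' hC⟩

theorem IsBoundedMeasurable.weightOp (hv : IsBoundedMeasurable v) (h : IsCumulative a b μ S L L₀)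
    (hG : BoundedVariationOn G (Icc a b)) : IsBoundedMeasurable (weightOp hab μ S L G v) :=
  isBoundedMeasurable_weightOp h hG (hv.integrable μ) fun t _ => hv.2.choose_spec t

end WeightOp

theorem existsUnique_fixedPoint_weightOp_comp {a b L₁₀ L₂₀ : ℝ} (hab : a ≤ b)
    {μ₁ μ₂ : Measure ℝ} [IsFiniteMeasure μ₁] [IsFiniteMeasure μ₂] {S₁ S₂ : ℝ → Set ℝ}
    {L₁ L₂ G₁ G₂ : ℝ → ℝ} (h₁ : IsCumulative a b μ₁ S₁ L₁ L₁₀)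
    (h₂ : IsCumulative a b μ₂ S₂ L₂ L₂₀) (hG₁ : BoundedVariationOn G₁ (Icc a b))
    (hG₂ : BoundedVariationOn G₂ (Icc a b)) :
    ∃! v, IsBoundedMeasurable v ∧ weightOp hab μ₂ S₂ L₂ G₂ (weightOp hab μ₁ S₁ L₁ G₁ v) = v := by
  have hK {L₀ m : ℝ} (hL₀ : 0 < L₀) (hm : 0 ≤ m) :
      0 ≤ 1 - L₀ / (L₀ + m) ∧ 1 - L₀ / (L₀ + m) < 1 :=
    ⟨sub_nonneg.2 ((div_le_one (by positivity)).2 (by linarith)),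
      sub_lt_self _ (div_pos hL₀ (by positivity))⟩
  obtain ⟨hK₁₀, hK₁⟩ := hK h₁.pos (measureReal_nonneg (μ := μ₁) (s := univ))
  obtain ⟨hK₂₀, hK₂⟩ := hK h₂.pos (measureReal_nonneg (μ := μ₂) (s := univ))
  refine exists_unique_fixedPoint_of_abs_sub_le (mul_nonneg hK₂₀ hK₁₀)
    (mul_lt_one_of_nonneg_of_lt_one_left hK₂₀ hK₂ hK₁.le)
    (fun _ _ => IsBoundedMeasurable.of_tendstoUniformly) (fun _ hw => hw.2)
    (fun _ hw => (hw.weightOp h₁ hG₁).weightOp h₂ hG₂) (fun v w hv hw D hD x => ?_)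
    (w₀ := 0) ⟨measurable_const, 0, by simp⟩
  rw [mul_assoc]
  exact abs_weightOp_sub_le h₂ ((hv.weightOp h₁ hG₁).integrable μ₂)
    ((hw.weightOp h₁ hG₁).integrable μ₂)
    (fun t _ => abs_weightOp_sub_le h₁ (hv.integrable μ₁) (hw.integrable μ₁) (fun t _ => hD t) t) x

theorem eqOn_of_eqOn_weightOp {a b L₁₀ L₂₀ : ℝ} (hab : a ≤ b) {μ₁ μ₂ : Measure ℝ}
    [IsFiniteMeasure μ₁] [IsFiniteMeasure μ₂] {S₁ S₂ : ℝ → Set ℝ} {L₁ L₂ G₁ G₂ v w₁ w₂ : ℝ → ℝ}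
    {C : ℝ} (h₁ : IsCumulative a b μ₁ S₁ L₁ L₁₀) (h₂ : IsCumulative a b μ₂ S₂ L₂ L₂₀)
    (hG₂ : BoundedVariationOn G₂ (Icc a b))
    (hv : ∀ u, IsBoundedMeasurable u →
      weightOp hab μ₂ S₂ L₂ G₂ (weightOp hab μ₁ S₁ L₁ G₁ u) = u → u = v)
    (hw₁ : Integrable w₁ μ₂) (hC : ∀ t ∈ Icc a b, |w₁ t| ≤ C)
    (he₁ : EqOn w₁ (weightOp hab μ₁ S₁ L₁ G₁ w₂) (Icc a b))
    (he₂ : EqOn w₂ (weightOp hab μ₂ S₂ L₂ G₂ w₁) (Icc a b)) :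
    EqOn w₁ (weightOp hab μ₁ S₁ L₁ G₁ v) (Icc a b) ∧ EqOn w₂ v (Icc a b) := by
  set Φ := weightOp hab μ₁ S₁ L₁ G₁
  set Ψ := weightOp hab μ₂ S₂ L₂ G₂
  have hΦ {u u' : ℝ → ℝ} (hu : EqOn u u' (Icc a b)) : Φ u = Φ u' := weightOp_congr h₁ hu
  have hΨ {u u' : ℝ → ℝ} (hu : EqOn u u' (Icc a b)) : Ψ u = Ψ u' := weightOp_congr h₂ hu
  -- `w₂` is only controlled on `[a, b]`; clamping makes it a bounded measurable fixed point.
  set W₂ := fun x => w₂ (projIcc a b hab x)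
  have hW₂ : W₂ = Ψ w₁ := comp_projIcc_eq_weightOp he₂
  have hΦW₂ : Φ W₂ = fun x => w₁ (projIcc a b hab x) := by
    rw [hΦ (eqOn_comp_projIcc hab w₂)]
    exact (comp_projIcc_eq_weightOp he₁).symm
  have hW₂v : W₂ = v := hv W₂ (hW₂ ▸ isBoundedMeasurable_weightOp h₂ hG₂ hw₁ hC) (by
    rw [hΦW₂, hΨ (eqOn_comp_projIcc hab w₁), hW₂])
  have hw₂v : EqOn w₂ v (Icc a b) := hW₂v ▸ (eqOn_comp_projIcc hab w₂).symm
  exact ⟨fun t ht => by rw [he₁ ht, hΦ hw₂v], hw₂v⟩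

section OrderBook

variable {a b u x : ℝ} {X : OrderBook} {wm wp : ℝ → ℝ}

theorem Mminus_eq_or_mem (a : ℝ) (X : OrderBook) : Mminus a X = a ∨ Mminus a X ∈ X.minus :=
  (insert_nonempty a _).csSup_mem (X.minus.finite_toSet.insert a)

theorem le_Mminus (hx : x ∈ X.minus) : x ≤ Mminus a X :=
  le_csSup (X.minus.finite_toSet.insert a).bddAbove (mem_insert_of_mem _ hx)

theorem Mminus_of_minus_eq_zero (h : X.minus = 0) : Mminus a X = a := by
  simp [Mminus, h]

theorem Mplus_eq_or_mem (b : ℝ) (X : OrderBook) : Mplus b X = b ∨ Mplus b X ∈ X.plus :=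
  (insert_nonempty b _).csInf_mem (X.plus.finite_toSet.insert b)

theorem Mplus_le (hx : x ∈ X.plus) : Mplus b X ≤ x :=
  csInf_le (X.plus.finite_toSet.insert b).bddBelow (mem_insert_of_mem _ hx)

theorem Mplus_of_plus_eq_zero (h : X.plus = 0) : Mplus b X = b := by
  simp [Mplus, h]

namespace IsConfig

theorem Mminus_mem (hX : IsConfig a b X) (h : X.minus ≠ 0) : Mminus a X ∈ X.minus := by
  refine (Mminus_eq_or_mem a X).resolve_left fun ha => ?_
  obtain ⟨x, hx⟩ := Multiset.exists_mem_of_ne_zero h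
  linarith [le_Mminus (a := a) hx, (hX.1 x hx).1]

theorem Mplus_mem (hX : IsConfig a b X) (h : X.plus ≠ 0) : Mplus b X ∈ X.plus := by
  refine (Mplus_eq_or_mem b X).resolve_left fun hb => ?_
  obtain ⟨x, hx⟩ := Multiset.exists_mem_of_ne_zero h
  linarith [Mplus_le (b := b) hx, (hX.2.1 x hx).2]

theorem Mminus_mem_Ico (hab : a < b) (hX : IsConfig a b X) : Mminus a X ∈ Ico a b := by
  rcases Mminus_eq_or_mem a X with h | h
  · rw [h]; exact ⟨le_rfl, hab⟩
  · exact Ioo_subset_Ico_self (hX.1 _ h)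

theorem Mplus_mem_Ioc (hab : a < b) (hX : IsConfig a b X) : Mplus b X ∈ Ioc a b := by
  rcases Mplus_eq_or_mem b X with h | h
  · rw [h]; exact ⟨hab, le_rfl⟩
  · exact Ioo_subset_Ioc_self (hX.2.1 _ h)

end IsConfig

theorem isConfig_empty : IsConfig a b ⟨0, 0⟩ := by
  simp [IsConfig]

theorem isConfig_buy (hx : x ∈ Ioo a b) : IsConfig a b ⟨{x}, 0⟩ := by
  simpa [IsConfig] using hx

theorem isConfig_sell (hx : x ∈ Ioo a b) : IsConfig a b ⟨0, {x}⟩ := by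
  simpa [IsConfig] using hx

theorem Mminus_buy (hx : a ≤ x) : Mminus a ⟨{x}, 0⟩ = x := by
  simp [Mminus, hx]

theorem Mplus_sell (hx : x ≤ b) : Mplus b ⟨0, {x}⟩ = x := by
  simp [Mplus, hx]

theorem linF_Lminus_sub (hab : a < b) (hX : IsConfig a b X) (hwm : wm a = 0) (hwp : wp b = 0)
    (hu : u ∈ Icc a b) :
    linF wm wp (Lminus a b u X) - linF wm wp X =
      if Mplus b X ≤ u then -wp (Mplus b X) else wm u := by
  by_cases hqu : Mplus b X ≤ u
  · rw [if_pos hqu]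
    by_cases hX₀ : X.plus = 0
    · have hqb : Mplus b X = b := Mplus_of_plus_eq_zero hX₀
      have hu' : u ∉ Ioo a b := fun h => by linarith [h.2]
      rw [Lminus, if_neg fun h => h.1 hX₀, if_neg hu', hqb, hwp, sub_self, neg_zero]
    · rw [Lminus, if_pos ⟨hX₀, hqu⟩, linF, linF,
        ← Multiset.sum_map_erase (hX.Mplus_mem hX₀) (f := wp)]
      ring
  · rw [if_neg hqu, Lminus, if_neg fun h => hqu h.2]
    split_ifs with hu'
    · simp [linF]
    · have hua : u = a := by
        by_contra h
        exact hu' ⟨lt_of_le_of_ne hu.1 (Ne.symm h),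
          (not_le.1 hqu).trans_le (hX.Mplus_mem_Ioc hab).2⟩
      rw [sub_self, hua, hwm]

theorem linF_Lplus_sub (hab : a < b) (hX : IsConfig a b X) (hwm : wm a = 0) (hwp : wp b = 0)
    (hu : u ∈ Icc a b) :
    linF wm wp (Lplus a b u X) - linF wm wp X =
      if u ≤ Mminus a X then -wm (Mminus a X) else wp u := by
  by_cases hum : u ≤ Mminus a X
  · rw [if_pos hum]
    by_cases hX₀ : X.minus = 0
    · have hma : Mminus a X = a := Mminus_of_minus_eq_zero hX₀
      have hu' : u ∉ Ioo a b := fun h => by linarith [h.1]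
      rw [Lplus, if_neg fun h => h.1 hX₀, if_neg hu', hma, hwm, sub_self, neg_zero]
    · rw [Lplus, if_pos ⟨hX₀, hum⟩, linF, linF,
        ← Multiset.sum_map_erase (hX.Mminus_mem hX₀) (f := wm)]
      ring
  · rw [if_neg hum, Lplus, if_neg fun h => hum h.2]
    split_ifs with hu'
    · simp [linF]
    · have hub : u = b := by
        by_contra h
        exact hu' ⟨(hX.Mminus_mem_Ico hab).1.trans_lt (not_le.1 hum), lt_of_le_of_ne hu.2 h⟩
      rw [sub_self, hub, hwp]

end OrderBook

section ArrivalMeasures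

variable {a b y : ℝ} {lm lp : ℝ → ℝ} {μ : Measure ℝ}

namespace IsMuMinus

theorem ae_mem_Icc (hμ : IsMuMinus a b lm μ) : ∀ᵐ x ∂μ, x ∈ Icc a b :=
  mem_ae_iff.2 hμ.2

theorem isFiniteMeasure (hμ : IsMuMinus a b lm μ) (hab : a ≤ b) : IsFiniteMeasure μ :=
  ⟨(measure_univ_le_add_compl (Icc a b)).trans_lt (by simp [hμ.1 a ⟨le_rfl, hab⟩, hμ.2])⟩

theorem measureReal_Icc (hμ : IsMuMinus a b lm μ) (hy : y ∈ Icc a b) (h₀ : 0 ≤ lm y) :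
    μ.real (Icc y b) = lm y := by
  rw [measureReal_def, hμ.1 y hy, ENNReal.toReal_ofReal h₀]

theorem measureReal_Ici (hμ : IsMuMinus a b lm μ) (hy : y ∈ Icc a b) (h₀ : 0 ≤ lm y) :
    μ.real (Ici y) = lm y := by
  have : Ici y ∩ Icc a b = Icc y b := by
    ext t
    simp only [mem_inter_iff, mem_Ici, mem_Icc]
    grind
  rw [measureReal_def, ← measure_inter_conull hμ.2, this, ← measureReal_def,
    hμ.measureReal_Icc hy h₀]

theorem isCumulative [IsFiniteMeasure μ] (hμ : IsMuMinus a b lm μ)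
    (hcont : ContinuousOn lm (Icc a b)) (h₀ : ∀ y ∈ Icc a b, 0 ≤ lm y) (hb : 0 < lm b) :
    IsCumulative a b μ (Ico · b) lm (lm b) where
  measurableSet _ := measurableSet_Ico
  monotoneOn_or_antitoneOn := .inr fun _ _ _ _ hxy => Ico_subset_Ico_left hxy
  subset_Icc hy := Ico_subset_Icc_self.trans (Icc_subset_Icc_left hy.1)
  eq_add_measureReal {y} hy := by
    have hb' : b ∈ Icc a b := ⟨hy.1.trans hy.2, le_rfl⟩
    have := measureReal_union (μ := μ) (s₁ := Ico y b)
      ((Iio_disjoint_Ici le_rfl).mono Ico_subset_Iio_self Icc_subset_Ici_self)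
      (measurableSet_Icc (a := b) (b := b))
    rw [Ico_union_Icc_eq_Icc hy.2 le_rfl, hμ.measureReal_Icc hy (h₀ y hy),
      hμ.measureReal_Icc hb' (h₀ b hb')] at this
    linarith
  continuousOn := hcont
  pos := hb

end IsMuMinus

namespace IsMuPlus

theorem ae_mem_Icc (hμ : IsMuPlus a b lp μ) : ∀ᵐ x ∂μ, x ∈ Icc a b :=
  mem_ae_iff.2 hμ.2

theorem isFiniteMeasure (hμ : IsMuPlus a b lp μ) (hab : a ≤ b) : IsFiniteMeasure μ :=
  ⟨(measure_univ_le_add_compl (Icc a b)).trans_lt (by simp [hμ.1 b ⟨hab, le_rfl⟩, hμ.2])⟩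

theorem measureReal_Icc (hμ : IsMuPlus a b lp μ) (hy : y ∈ Icc a b) (h₀ : 0 ≤ lp y) :
    μ.real (Icc a y) = lp y := by
  rw [measureReal_def, hμ.1 y hy, ENNReal.toReal_ofReal h₀]

theorem measureReal_Iic (hμ : IsMuPlus a b lp μ) (hy : y ∈ Icc a b) (h₀ : 0 ≤ lp y) :
    μ.real (Iic y) = lp y := by
  have : Iic y ∩ Icc a b = Icc a y := by
    ext t
    simp only [mem_inter_iff, mem_Iic, mem_Icc]
    grind
  rw [measureReal_def, ← measure_inter_conull hμ.2, this, ← measureReal_def,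
    hμ.measureReal_Icc hy h₀]

theorem isCumulative [IsFiniteMeasure μ] (hμ : IsMuPlus a b lp μ)
    (hcont : ContinuousOn lp (Icc a b)) (h₀ : ∀ y ∈ Icc a b, 0 ≤ lp y) (ha : 0 < lp a) :
    IsCumulative a b μ (Ioc a ·) lp (lp a) where
  measurableSet _ := measurableSet_Ioc
  monotoneOn_or_antitoneOn := .inl fun _ _ _ _ hxy => Ioc_subset_Ioc_right hxy
  subset_Icc hy := Ioc_subset_Icc_self.trans (Icc_subset_Icc_right hy.2)
  eq_add_measureReal {y} hy := by
    have ha' : a ∈ Icc a b := ⟨le_rfl, hy.1.trans hy.2⟩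
    have := measureReal_union (μ := μ) (s₁ := Icc a a)
      ((Iic_disjoint_Ioi le_rfl).mono Icc_subset_Iic_self Ioc_subset_Ioi_self)
      (measurableSet_Ioc (a := a) (b := y))
    rw [Icc_union_Ioc_eq_Icc le_rfl hy.1, hμ.measureReal_Icc hy (h₀ y hy),
      hμ.measureReal_Icc ha' (h₀ a ha')] at this
    linarith
  continuousOn := hcont
  pos := ha

end IsMuPlus

end ArrivalMeasures

section Generator

variable {a b : ℝ} {lm lp wm wp gm gp : ℝ → ℝ} {μm μp : Measure ℝ} [IsFiniteMeasure μm]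
  [IsFiniteMeasure μp] {X : OrderBook}

theorem genOp_linF (hab : a < b) (hA3 : A3 a b lm lp) (hμm : IsMuMinus a b lm μm)
    (hμp : IsMuPlus a b lp μp) (hwm : Integrable wm μm) (hwp : Integrable wp μp)
    (hwma : wm a = 0) (hwpb : wp b = 0) (hX : IsConfig a b X) :
    genOp a b μm μp (linF wm wp) X =
      (∫ u in Iio (Mplus b X), wm u ∂μm) - wp (Mplus b X) * lm (Mplus b X) +
        ((∫ u in Ioi (Mminus a X), wp u ∂μp) - wm (Mminus a X) * lp (Mminus a X)) := by
  have hq := Ioc_subset_Icc_self (hX.Mplus_mem_Ioc hab)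
  have hm := Ico_subset_Icc_self (hX.Mminus_mem_Ico hab)
  rw [genOp,
    integral_congr_ae (hμm.ae_mem_Icc.mono fun u hu => linF_Lminus_sub hab hX hwma hwpb hu),
    integral_congr_ae (hμp.ae_mem_Icc.mono fun u hu => linF_Lplus_sub hab hX hwma hwpb hu),
    integral_ite_le hwm, integral_le_ite hwp, hμm.measureReal_Ici hq (hA3.2.2.2.2.1 _ hq),
    hμp.measureReal_Iic hm (hA3.2.2.2.2.2 _ hm)]
  ring

theorem genOp_linF_eq_of_forall_mem_Icc (hab : a < b) (hA3 : A3 a b lm lp)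
    (hμm : IsMuMinus a b lm μm) (hμp : IsMuPlus a b lp μp) (hW : WPair a b wm wp)
    (hm : ∀ y ∈ Icc a b, wm y * lp y + ∫ t in Ioc a y, wp t ∂μp = gm a - gm y)
    (hp : ∀ y ∈ Icc a b, wp y * lm y + ∫ t in Ico y b, wm t ∂μm = gp b - gp y)
    {X : OrderBook} (hX : IsConfig a b X) :
    genOp a b μm μp (linF wm wp) X = gm (Mminus a X) + gp (Mplus b X) -
      (gm a + gp b - ((∫ u in Iio b, wm u ∂μm) + ∫ u in Ioi a, wp u ∂μp)) := by
  obtain ⟨-, -, hBVm, hBVp, -, -, hwma, hwpb⟩ := hW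
  have hwm := hBVm.integrable hab.le hμm.ae_mem_Icc
  have hwp := hBVp.integrable hab.le hμp.ae_mem_Icc
  have hq := hX.Mplus_mem_Ioc hab
  have hm' := hX.Mminus_mem_Ico hab
  rw [genOp_linF hab hA3 hμm hμp hwm hwp hwma hwpb hX, setIntegral_Iio_eq_add hwm hq.2,
    setIntegral_Ioi_eq_add hwp hm'.1]
  linarith [hm _ (Ico_subset_Icc_self hm'), hp _ (Ioc_subset_Icc_self hq)]

theorem forall_mem_Icc_of_genOp_linF_eq (hab : a < b) (hA3 : A3 a b lm lp)
    (hμm : IsMuMinus a b lm μm) (hμp : IsMuPlus a b lp μp)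
    (hΦ : IsCumulative a b μp (Ioc a ·) lp (lp a)) (hΨ : IsCumulative a b μm (Ico · b) lm (lm b))
    (hW : WPair a b wm wp) (hgm : ContinuousWithinAt gm (Iio b) b)
    (hgp : ContinuousWithinAt gp (Ioi a) a) {c : ℝ}
    (hid : ∀ X, IsConfig a b X →
      genOp a b μm μp (linF wm wp) X = gm (Mminus a X) + gp (Mplus b X) - c) :
    (∀ y ∈ Icc a b, wm y * lp y + ∫ t in Ioc a y, wp t ∂μp = gm a - gm y) ∧
      (∀ y ∈ Icc a b, wp y * lm y + ∫ t in Ico y b, wm t ∂μm = gp b - gp y) ∧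
      c = gm a + gp b - ((∫ u in Iio b, wm u ∂μm) + ∫ u in Ioi a, wp u ∂μp) := by
  obtain ⟨⟨Cm, hCm⟩, ⟨Cp, hCp⟩, hBVm, hBVp, hwmL, hwpR, hwma, hwpb⟩ := hW
  have hwm := hBVm.integrable hab.le hμm.ae_mem_Icc
  have hwp := hBVp.integrable hab.le hμp.ae_mem_Icc
  have key {X : OrderBook} (hX : IsConfig a b X) :=
    (genOp_linF hab hA3 hμm hμp hwm hwp hwma hwpb hX).symm.trans (hid X hX)
  have hc := key isConfig_empty
  rw [Mminus_of_minus_eq_zero rfl, Mplus_of_plus_eq_zero rfl, hwma, hwpb] at hc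
  have hbuy : ∀ y ∈ Ioo a b, wm y * lp y + ∫ t in Ioc a y, wp t ∂μp = gm a - gm y := by
    intro y hy
    have := key (isConfig_buy hy)
    rw [Mminus_buy hy.1.le, Mplus_of_plus_eq_zero rfl, hwpb] at this
    linarith [setIntegral_Ioi_eq_add hwp hy.1.le]
  have hsell : ∀ y ∈ Ioo a b, wp y * lm y + ∫ t in Ico y b, wm t ∂μm = gp b - gp y := by
    intro y hy
    have := key (isConfig_sell hy)
    rw [Mplus_sell hy.2.le, Mminus_of_minus_eq_zero rfl, hwma] at this
    linarith [setIntegral_Iio_eq_add hwm hy.2.le]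
  refine ⟨fun y hy => ?_, fun y hy => ?_, by linarith⟩
  · rcases hy.1.eq_or_lt with rfl | hay
    · simp [hwma]
    rcases hy.2.eq_or_lt with rfl | hyb
    · exact hΦ.mul_add_setIntegral_eq hab hwp hCp hy
        ((continuousWithinAt_Ioo_iff_Iio hay).2 (hwmL _ ⟨hay, le_rfl⟩))
        (((continuousWithinAt_Ioo_iff_Iio hay).2 hgm).const_sub (gm a)) hbuy
    · exact hbuy y ⟨hay, hyb⟩
  · rcases hy.2.eq_or_lt with rfl | hyb
    · simp [hwpb]
    rcases hy.1.eq_or_lt with rfl | hay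
    · exact hΨ.mul_add_setIntegral_eq hab hwm hCm hy
        ((continuousWithinAt_Ioo_iff_Ioi hyb).2 (hwpR _ ⟨le_rfl, hyb⟩))
        (((continuousWithinAt_Ioo_iff_Ioi hyb).2 hgp).const_sub (gp b)) hsell
    · exact hsell y ⟨hay, hyb⟩

end Generator

theorem wPair_weightOp {a b : ℝ} (hab : a < b) {lm lp gm gp v : ℝ → ℝ} {μm μp : Measure ℝ}
    [IsFiniteMeasure μm] [IsFiniteMeasure μp] (hΦ : IsCumulative a b μp (Ioc a ·) lp (lp a))
    (hΨ : IsCumulative a b μm (Ico · b) lm (lm b)) (hgmBV : BoundedVariationOn gm (Icc a b))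
    (hgpBV : BoundedVariationOn gp (Icc a b))
    (hgmL : ∀ x ∈ Ioc a b, ContinuousWithinAt gm (Iio x) x)
    (hgpR : ∀ x ∈ Ico a b, ContinuousWithinAt gp (Ioi x) x) (hv : IsBoundedMeasurable v) :
    WPair a b (weightOp hab.le μp (Ioc a ·) lp (fun m => gm a - gm m) v)
      (weightOp hab.le μm (Ico · b) lm (fun q => gp b - gp q)
        (weightOp hab.le μp (Ioc a ·) lp (fun m => gm a - gm m) v)) := by
  have hw := hv.weightOp (hab := hab.le) hΦ (hgmBV.const_sub (gm a))
  obtain ⟨C₁, hC₁⟩ := hw.2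
  obtain ⟨-, C₂, hC₂⟩ := hw.weightOp (hab := hab.le) hΨ (hgpBV.const_sub (gp b))
  have hvI := hv.integrable μp
  have hwI := hw.integrable μm
  obtain ⟨Cv, hCv⟩ := hv.2
  refine ⟨⟨C₁, fun x _ => hC₁ x⟩, ⟨C₂, fun x _ => hC₂ x⟩,
    boundedVariationOn_weightOp hΦ (hgmBV.const_sub _) hvI fun t _ => hCv t,
    boundedVariationOn_weightOp hΨ (hgpBV.const_sub _) hwI fun t _ => hC₁ t,
    fun x hx => ?_, fun x hx => ?_, ?_, ?_⟩
  · rw [← continuousWithinAt_Ioo_iff_Iio hx.1]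
    exact continuousWithinAt_weightOp hΦ (Ioo_subset_Icc_self.trans (Icc_subset_Icc_right hx.2))
      (Ioc_subset_Icc_self hx) (((continuousWithinAt_Ioo_iff_Iio hx.1).2 (hgmL x hx)).const_sub _)
      hvI fun t _ => hCv t
  · rw [← continuousWithinAt_Ioo_iff_Ioi hx.2]
    exact continuousWithinAt_weightOp hΨ (Ioo_subset_Icc_self.trans (Icc_subset_Icc_left hx.1))
      (Ico_subset_Icc_self hx) (((continuousWithinAt_Ioo_iff_Ioi hx.2).2 (hgpR x hx)).const_sub _)
      hwI fun t _ => hC₁ t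
  · simp [weightOp_of_mem (left_mem_Icc.2 hab.le)]
  · simp [weightOp_of_mem (right_mem_Icc.2 hab.le)]

theorem stmt7_general (a b : ℝ) (hab : a < b) (lm lp : ℝ → ℝ)
    (hA3 : A3 a b lm lp) (hA6 : A6 a b lm lp)
    (μm μp : MeasureTheory.Measure ℝ)
    (hμm : IsMuMinus a b lm μm) (hμp : IsMuPlus a b lp μp)
    (gm gp : ℝ → ℝ)
    (hgmBV : BoundedVariationOn gm (Set.Icc a b))
    (hgpBV : BoundedVariationOn gp (Set.Icc a b))
    (hgmL : ∀ x ∈ Set.Ioc a b, ContinuousWithinAt gm (Set.Iio x) x)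
    (hgpR : ∀ x ∈ Set.Ico a b, ContinuousWithinAt gp (Set.Ioi x) x) :
    ∃ wm wp : ℝ → ℝ, ∃ c : ℝ,
      (WPair a b wm wp ∧
        ∀ X : OrderBook, IsConfig a b X →
          genOp a b μm μp (linF wm wp) X = gm (Mminus a X) + gp (Mplus b X) - c) ∧
      ∀ wm' wp' : ℝ → ℝ, ∀ c' : ℝ,
        (WPair a b wm' wp' ∧
          ∀ X : OrderBook, IsConfig a b X →
            genOp a b μm μp (linF wm' wp') X = gm (Mminus a X) + gp (Mplus b X) - c') →
        Set.EqOn wm' wm (Set.Icc a b) ∧ Set.EqOn wp' wp (Set.Icc a b) ∧ c' = c := by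
  have := hμm.isFiniteMeasure hab.le
  have := hμp.isFiniteMeasure hab.le
  have hΦ := hμp.isCumulative hA3.2.1 hA3.2.2.2.2.2 hA6.1
  have hΨ := hμm.isCumulative hA3.1 hA3.2.2.2.2.1 hA6.2
  obtain ⟨wp, ⟨hwp, hfix⟩, huniq⟩ := existsUnique_fixedPoint_weightOp_comp hab.le hΦ hΨ
    (hgmBV.const_sub (gm a)) (hgpBV.const_sub (gp b))
  set wm := weightOp hab.le μp (Ioc a ·) lp (fun m => gm a - gm m) wp
  have hW : WPair a b wm wp := hfix ▸ wPair_weightOp hab hΦ hΨ hgmBV hgpBV hgmL hgpR hwp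
  refine ⟨wm, wp, _, ⟨hW, fun X hX => genOp_linF_eq_of_forall_mem_Icc hab hA3 hμm hμp hW
    ((eqOn_weightOp_iff hΦ).1 fun _ _ => rfl)
    ((eqOn_weightOp_iff hΨ).1 fun y _ => congrFun hfix.symm y) hX⟩, ?_⟩
  rintro wm' wp' c' ⟨hW', hid'⟩
  obtain ⟨hm', hp', rfl⟩ := forall_mem_Icc_of_genOp_linF_eq hab hA3 hμm hμp hΦ hΨ hW'
    (hgmL b ⟨hab, le_rfl⟩) (hgpR a ⟨le_rfl, hab⟩) hid'
  obtain ⟨⟨C, hC⟩, -, hBV, -⟩ := hW'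
  obtain ⟨hm, hp⟩ := eqOn_of_eqOn_weightOp hab.le hΦ hΨ (hgpBV.const_sub (gp b))
    (fun u hu hfix => huniq u ⟨hu, hfix⟩) (hBV.integrable hab.le hμm.ae_mem_Icc) hC
    ((eqOn_weightOp_iff hΦ).2 hm') ((eqOn_weightOp_iff hΨ).2 hp')
  refine ⟨hm, hp, ?_⟩
  rw [integral_congr_ae (ae_restrict_of_ae (hμm.ae_mem_Icc.mono hm)),
    integral_congr_ae (ae_restrict_of_ae (hμp.ae_mem_Icc.mono hp))]

/-- inverse problem: under (A3) and (A6), for every pair `(gm, gp)` of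
bounded functions of bounded variation (`gm` left-continuous, `gp` right-continuous)
there exist an admissible pair of weight functions `(wm, wp)` and a constant `c`,
unique (the weight functions as functions on `[a,b]`), such that the associated linear
functional `F = linF wm wp` satisfies `GF(X) = gm(M₋(X)) + gp(M₊(X)) − c` for every
configuration `X`. -/
theorem stmt7 (a b : ℝ) (hab : a < b) (lm lp : ℝ → ℝ)
    (hA3 : A3 a b lm lp) (hA6 : A6 a b lm lp)
    (μm μp : MeasureTheory.Measure ℝ)
    (hμm : IsMuMinus a b lm μm) (hμp : IsMuPlus a b lp μp)
    (gm gp : ℝ → ℝ)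
    (hgmB : ∃ C, ∀ x ∈ Set.Icc a b, |gm x| ≤ C)
    (hgpB : ∃ C, ∀ x ∈ Set.Icc a b, |gp x| ≤ C)
    (hgmBV : BoundedVariationOn gm (Set.Icc a b))
    (hgpBV : BoundedVariationOn gp (Set.Icc a b))
    (hgmL : ∀ x ∈ Set.Ioc a b, ContinuousWithinAt gm (Set.Iio x) x)
    (hgpR : ∀ x ∈ Set.Ico a b, ContinuousWithinAt gp (Set.Ioi x) x) :
    ∃ wm wp : ℝ → ℝ, ∃ c : ℝ,
      (WPair a b wm wp ∧
        ∀ X : OrderBook, IsConfig a b X →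
          genOp a b μm μp (linF wm wp) X = gm (Mminus a X) + gp (Mplus b X) - c) ∧
      ∀ wm' wp' : ℝ → ℝ, ∀ c' : ℝ,
        (WPair a b wm' wp' ∧
          ∀ X : OrderBook, IsConfig a b X →
            genOp a b μm μp (linF wm' wp') X = gm (Mminus a X) + gp (Mplus b X) - c') →
        Set.EqOn wm' wm (Set.Icc a b) ∧ Set.EqOn wp' wp (Set.Icc a b) ∧ c' = c :=
  stmt7_general a b hab lm lp hA3 hA6 μm μp hμm hμp gm gp hgmBV hgpBV hgmL hgpR
end
end

section
/- Assume (A3), (A5) and (A7). For every V ∈ (V_W, V_max] such that I₋ < λ₋⁻¹(V) < λ₊⁻¹(V) < I₊, one has V_W⁻² − Φ(V) = Λ₋(λ₋⁻¹(V), λ₊⁻¹(V)) = Λ₊(λ₋⁻¹(V), λ₊⁻¹(V)). -/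
/-!
Let `x ∈ (J₋, J₊)` be a crossing point, `λ₋(x) = λ₊(x) = V_W`. The push-forward of `d(-1/λ₊)`
under the continuous monotone map `λ₊` is `W⁻² dW`, so the substitution `W = λ₊(y)` turns the
`λ₊⁻¹`-half of `Φ(V)` into `∫_{(x, J₊]} (1/λ₋) d(-1/λ₊)`; the generalized inverse undoes `λ₊`
except on the intervals where `λ₊` is constant, which are null. Reflecting `y ↦ -y` treats the
`λ₋⁻¹`-half in the same way, so
`Φ(V) = ∫_{(J₋, x]} (1/λ₊) d(1/λ₋) + ∫_{(x, J₊]} (1/λ₋) d(-1/λ₊)`.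
Integration by parts on `(J₋, x]` and on `(x, J₊]` (split `(μ × ν)((s, t]²)` along the diagonal;
`d(1/λ₋)` has no atoms since `λ₋` is continuous) then converts this into both claimed formulas.
-/

open MeasureTheory Set
open scoped ENNReal

noncomputable section

/-- Assumption (A5): `lm` and `lp` are positive on the open interval `(a,b)`. -/
def A5 (a b : ℝ) (lm lp : ℝ → ℝ) : Prop := ∀ x ∈ Set.Ioo a b, 0 < lm x ∧ 0 < lp x

/-- The Walrasian volume of trade `V_W`. -/
def VWal (a b : ℝ) (lm lp : ℝ → ℝ) : ℝ :=
  sSup ((fun x => min (lm x) (lp x)) '' Set.Icc a b)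

/-- The maximal volume of trade `V_max`. -/
def Vmax (a b : ℝ) (lm lp : ℝ → ℝ) : ℝ := min (lm a) (lp b)

/-- The left-continuous inverse `λ₋⁻¹(V) = sup {x ∈ [a,b] : lm x ≥ V}`. -/
def linvm (a b : ℝ) (lm : ℝ → ℝ) (V : ℝ) : ℝ := sSup {x | x ∈ Set.Icc a b ∧ V ≤ lm x}

/-- The left-continuous inverse `λ₊⁻¹(V) = inf {x ∈ [a,b] : lp x ≥ V}`. -/
def linvp (a b : ℝ) (lp : ℝ → ℝ) (V : ℝ) : ℝ := sInf {x | x ∈ Set.Icc a b ∧ V ≤ lp x}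

/-- The function `Φ(V) = ∫_{V_W}^V (1/λ₊(λ₋⁻¹(W)) + 1/λ₋(λ₊⁻¹(W))) W⁻² dW`,
with values in `[0,∞]`. -/
def Phi (a b : ℝ) (lm lp : ℝ → ℝ) (V : ℝ) : ℝ≥0∞ :=
  ∫⁻ W in Set.Ioc (VWal a b lm lp) V,
    ENNReal.ofReal (((lp (linvm a b lm W))⁻¹ + (lm (linvp a b lp W))⁻¹) * (W ^ 2)⁻¹)

/-- Luckock's volume of trade `V_L`. -/
def VLuc (a b : ℝ) (lm lp : ℝ → ℝ) : ℝ :=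
  sSup {V | V ∈ Set.Icc (VWal a b lm lp) (Vmax a b lm lp) ∧
    Phi a b lm lp V ≤ ENNReal.ofReal (((VWal a b lm lp) ^ 2)⁻¹)}

open Filter Topology

def IsStieltjesOn (μ : Measure ℝ) (h : ℝ → ℝ) (s : Set ℝ) : Prop :=
  ∀ x ∈ s, ∀ y ∈ s, x ≤ y → μ (Ioc x y) = ENNReal.ofReal (h y - h x)

namespace IsStieltjesOn

variable {μ : Measure ℝ} {h : ℝ → ℝ} {s t : Set ℝ}

lemma mono (hμ : IsStieltjesOn μ h s) (hts : t ⊆ s) : IsStieltjesOn μ h t :=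
  fun x hx y hy => hμ x (hts hx) y (hts hy)

lemma congr {h' : ℝ → ℝ} (hμ : IsStieltjesOn μ h s) (hh : EqOn h h' s) : IsStieltjesOn μ h' s :=
  fun x hx y hy hxy => by rw [hμ x hx y hy hxy, hh hx, hh hy]

lemma measure_Ioc_ne_top (hμ : IsStieltjesOn μ h s) {x y : ℝ} (hx : x ∈ s) (hy : y ∈ s)
    (hxy : x ≤ y) : μ (Ioc x y) ≠ ⊤ := by
  rw [hμ x hx y hy hxy]; exact ENNReal.ofReal_ne_top

lemma measure_singleton {x y : ℝ} (hμ : IsStieltjesOn μ h (Icc x y)) (hxy : x < y)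
    (hh : ContinuousWithinAt h (Icc x y) y) : μ {y} = 0 := by
  have hlim : Tendsto (fun z => ENNReal.ofReal (h y - h z)) (𝓝[<] y) (𝓝 0) := by
    rw [← ENNReal.ofReal_zero, ← sub_self (h y)]
    exact ENNReal.tendsto_ofReal
      (tendsto_const_nhds.sub (hh.mono_of_mem_nhdsWithin (Icc_mem_nhdsLT hxy)))
  refine le_antisymm (ge_of_tendsto hlim ?_) bot_le
  filter_upwards [Ico_mem_nhdsLT hxy] with z hz
  rw [← hμ z (Ico_subset_Icc_self hz) y (right_mem_Icc.2 hxy.le) hz.2.le]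
  exact measure_mono (singleton_subset_iff.2 ⟨hz.2, le_rfl⟩)

lemma measure_singleton_of_mem_Ioo {a b y : ℝ} (hμ : IsStieltjesOn μ h (Ioo a b))
    (hh : ContinuousOn h (Ioo a b)) (hy : y ∈ Ioo a b) : μ {y} = 0 := by
  obtain ⟨x, hax, hxy⟩ := exists_between hy.1
  have hsub : Icc x y ⊆ Ioo a b := Icc_subset_Ioo hax hy.2
  exact (hμ.mono hsub).measure_singleton hxy ((hh y hy).mono hsub)

lemma measure_Ico {a b x y : ℝ} (hμ : IsStieltjesOn μ h (Ioo a b))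
    (hh : ContinuousOn h (Ioo a b)) (hx : x ∈ Ioo a b) (hy : y ∈ Ioo a b) (hxy : x ≤ y) :
    μ (Ico x y) = ENNReal.ofReal (h y - h x) := by
  rw [measure_congr (Ico_ae_eq_Ioc' (hμ.measure_singleton_of_mem_Ioo hh hx)
    (hμ.measure_singleton_of_mem_Ioo hh hy)), hμ x hx y hy hxy]

lemma map_neg {a b : ℝ} (hμ : IsStieltjesOn μ h (Ioo a b)) (hh : ContinuousOn h (Ioo a b)) :
    IsStieltjesOn (μ.map Neg.neg) (fun y => -h (-y)) (Ioo (-b) (-a)) := by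
  intro x hx y hy hxy
  have hmem : ∀ {z}, z ∈ Ioo (-b) (-a) → -z ∈ Ioo a b := fun hz =>
    ⟨lt_neg_of_lt_neg hz.2, neg_lt_of_neg_lt hz.1⟩
  rw [Measure.map_apply measurable_neg measurableSet_Ioc, neg_preimage, neg_Ioc,
    hμ.measure_Ico hh (hmem hy) (hmem hx) (neg_le_neg hxy), neg_sub_neg]

end IsStieltjesOn

lemma setLIntegral_Ioc_inv_sq {p q : ℝ} (hp : 0 < p) (hpq : p ≤ q) :
    ∫⁻ W in Ioc p q, ENNReal.ofReal ((W ^ 2)⁻¹) = ENNReal.ofReal (p⁻¹ - q⁻¹) := by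
  have hne : ∀ W ∈ uIcc p q, W ≠ 0 := fun W hW => (hp.trans_le (uIcc_of_le hpq ▸ hW).1).ne'
  have hderiv : ∀ W ∈ uIcc p q, HasDerivAt (fun W : ℝ => -W⁻¹) (W ^ 2)⁻¹ W := fun W hW => by
    have := (hasDerivAt_inv (hne W hW)).neg
    rwa [neg_neg] at this
  have hint : IntervalIntegrable (fun W : ℝ => (W ^ 2)⁻¹) volume p q :=
    (ContinuousOn.inv₀ (by fun_prop) fun W hW => pow_ne_zero 2 (hne W hW)).intervalIntegrable
  rw [← ofReal_integral_eq_lintegral_ofReal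
      ((intervalIntegrable_iff_integrableOn_Ioc_of_le hpq).1 hint)
      (ae_of_all _ fun W => by positivity),
    ← intervalIntegral.integral_of_le hpq,
    intervalIntegral.integral_eq_sub_of_hasDerivAt hderiv hint, neg_sub_neg]

lemma isStieltjesOn_withDensity_inv_sq :
    IsStieltjesOn (volume.withDensity fun W => ENNReal.ofReal ((W ^ 2)⁻¹)) (fun W => -W⁻¹)
      (Ioi 0) := by
  intro p hp q _ hpq
  rw [withDensity_apply _ measurableSet_Ioc, setLIntegral_Ioc_inv_sq hp hpq, neg_sub_neg]

section GeneralizedInverse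

variable {a b : ℝ} {f : ℝ → ℝ}

lemma linvp_mem_Icc {d W : ℝ} (hd : d ∈ Icc a b) (hW : W ≤ f d) : linvp a b f W ∈ Icc a d :=
  ⟨le_csInf ⟨d, hd, hW⟩ fun _ hx => hx.1.1, csInf_le ⟨a, fun _ hx => hx.1.1⟩ ⟨hd, hW⟩⟩

lemma monotoneOn_linvp {d : ℝ} (hd : d ∈ Icc a b) : MonotoneOn (linvp a b f) (Iic (f d)) :=
  fun _ _ _ hW₂ hW => csInf_le_csInf ⟨a, fun _ hx => hx.1.1⟩ ⟨d, hd, hW₂⟩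
    fun _ hx => ⟨hx.1, hW.trans hx.2⟩

lemma linvp_mem_Icc_of_mem_Ioc {c d W : ℝ} (hfm : MonotoneOn f (Icc a b)) (hc : c ∈ Icc a b)
    (hd : d ∈ Icc a b) (hW : W ∈ Ioc (f c) (f d)) : linvp a b f W ∈ Icc c d := by
  refine ⟨le_csInf ⟨d, hd, hW.2⟩ fun x hx => ?_, (linvp_mem_Icc hd hW.2).2⟩
  by_contra! hxc
  exact (hW.1.trans_le hx.2).not_ge (hfm hx.1 hc hxc.le)

lemma linvp_apply_self {x : ℝ} (hx : x ∈ Icc a b) (hlt : ∀ z < x, f z < f x) :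
    linvp a b f (f x) = x :=
  IsLeast.csInf_eq ⟨⟨hx, le_rfl⟩, fun z hz => not_lt.1 fun hzx => (hlt z hzx).not_ge hz.2⟩

lemma apply_linvp {W : ℝ} (hf : ContinuousOn f (Icc a b)) (hab : a ≤ b) (hW : W ≤ f b)
    (ha : a < linvp a b f W) : f (linvp a b f W) = W := by
  have hbdd : BddBelow {x | x ∈ Icc a b ∧ W ≤ f x} := ⟨a, fun _ hx => hx.1.1⟩
  have hJ : linvp a b f W ∈ Icc a b ∩ f ⁻¹' Ici W :=
    (hf.preimage_isClosed_of_isClosed isClosed_Icc isClosed_Ici).csInf_mem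
      ⟨b, ⟨hab, le_rfl⟩, hW⟩ hbdd
  have hfa : f a < W := not_le.1 fun h => ha.not_ge (csInf_le hbdd ⟨left_mem_Icc.2 hab, h⟩)
  obtain ⟨z, hz, hfz⟩ := intermediate_value_Icc ha.le
    (hf.mono (Icc_subset_Icc_right hJ.1.2)) ⟨hfa.le, hJ.2⟩
  have hJz : linvp a b f W ≤ z := csInf_le hbdd ⟨⟨hz.1, hz.2.trans hJ.1.2⟩, hfz.ge⟩
  rwa [le_antisymm hz.2 hJz] at hfz

lemma linvp_congr {g : ℝ → ℝ} (h : EqOn f g (Icc a b)) : linvp a b f = linvp a b g := by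
  funext W
  unfold linvp
  congr 1
  ext x
  exact and_congr_right fun hx => by rw [h hx]

lemma linvm_eq_neg_linvp (W : ℝ) : linvm a b f W = -linvp (-b) (-a) (fun y => f (-y)) W := by
  have : {y | y ∈ Icc (-b) (-a) ∧ W ≤ f (-y)} = -{x | x ∈ Icc a b ∧ W ≤ f x} := by
    ext y
    simp only [mem_ofPred_eq, Set.mem_neg, mem_Icc, neg_le, le_neg]
    tauto
  rw [linvp, this, Real.sInf_neg, neg_neg, linvm]

lemma exists_continuous_monotone_eqOn (hab : a ≤ b) (hf : ContinuousOn f (Icc a b))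
    (hfm : MonotoneOn f (Icc a b)) : ∃ F : ℝ → ℝ, Continuous F ∧ Monotone F ∧ EqOn F f (Icc a b) :=
  ⟨fun x => f (projIcc a b hab x),
    hf.comp_continuous (continuous_subtype_val.comp continuous_projIcc)
      fun x => (projIcc a b hab x).2,
    fun x y hxy => hfm (projIcc a b hab x).2 (projIcc a b hab y).2 (monotone_projIcc hab hxy),
    fun x hx => by simp only [projIcc_of_mem hab hx]⟩

lemma linvm_mem_Icc {W : ℝ} (hab : a ≤ b) (hW : W ≤ f a) : linvm a b f W ∈ Icc a b :=
  ⟨le_csSup ⟨b, fun _ hx => hx.1.2⟩ ⟨left_mem_Icc.2 hab, hW⟩,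
    csSup_le ⟨a, left_mem_Icc.2 hab, hW⟩ fun _ hx => hx.1.2⟩

lemma apply_linvm {W : ℝ} (hf : ContinuousOn f (Icc a b)) (hab : a ≤ b) (hW : W ≤ f a)
    (hb : linvm a b f W < b) : f (linvm a b f W) = W := by
  rw [linvm_eq_neg_linvp] at hb ⊢
  exact apply_linvp (f := fun y => f (-y))
    (hf.comp continuousOn_neg fun y hy => ⟨le_neg_of_le_neg hy.2, neg_le_of_neg_le hy.1⟩)
    (neg_le_neg hab) (by rwa [neg_neg]) (neg_lt.1 hb)

end GeneralizedInverse

section ChangeOfVariables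

variable {f φ : ℝ → ℝ} {μ : Measure ℝ} {a b c d : ℝ}

lemma exists_Ioc_inter_preimage_Iic (hf : Continuous f) (hfm : Monotone f) (hcd : c ≤ d) {r : ℝ}
    (hr : f c ≤ r) : ∃ e ∈ Icc c d, f e = min r (f d) ∧ Ioc c d ∩ f ⁻¹' Iic r = Ioc c e := by
  by_cases hrd : f d ≤ r
  · exact ⟨d, right_mem_Icc.2 hcd, (min_eq_right hrd).symm,
      inter_eq_left.2 fun x hx => (hfm hx.2).trans hrd⟩
  rw [not_le] at hrd
  set T := Icc c d ∩ f ⁻¹' Iic r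
  have hTbdd : BddAbove T := ⟨d, fun _ hx => hx.1.2⟩
  have he : sSup T ∈ T :=
    (isClosed_Icc.inter (isClosed_Iic.preimage hf)).csSup_mem ⟨c, left_mem_Icc.2 hcd, hr⟩ hTbdd
  obtain ⟨z, hz, hfz⟩ := intermediate_value_Icc he.1.2 hf.continuousOn ⟨he.2, hrd.le⟩
  have hze : z = sSup T :=
    le_antisymm (le_csSup hTbdd ⟨⟨he.1.1.trans hz.1, hz.2⟩, hfz.le⟩) hz.1
  refine ⟨sSup T, he.1, by rw [← hze, hfz, min_eq_left hrd.le], ?_⟩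
  ext x
  constructor
  · rintro ⟨hx, hfx⟩
    exact ⟨hx.1, le_csSup hTbdd ⟨⟨hx.1.le, hx.2⟩, hfx⟩⟩
  · rintro ⟨hcx, hxe⟩
    exact ⟨⟨hcx, hxe.trans he.1.2⟩, (hfm hxe).trans he.2⟩

namespace IsStieltjesOn

lemma map_restrict_Ioc (hf : Continuous f) (hfm : Monotone f) (hcd : c ≤ d) {ρ : Measure ℝ}
    (hμ : IsStieltjesOn μ (φ ∘ f) (Icc c d)) (hρ : IsStieltjesOn ρ φ (Icc (f c) (f d))) :
    (μ.restrict (Ioc c d)).map f = ρ.restrict (Ioc (f c) (f d)) := by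
  have hc : c ∈ Icc c d := left_mem_Icc.2 hcd
  have : IsFiniteMeasure (μ.restrict (Ioc c d)) :=
    isFiniteMeasure_restrict.2 (hμ.measure_Ioc_ne_top hc (right_mem_Icc.2 hcd) hcd)
  refine Measure.ext_of_Iic _ _ fun r => ?_
  rw [Measure.map_apply hf.measurable measurableSet_Iic,
    Measure.restrict_apply (hf.measurable measurableSet_Iic),
    Measure.restrict_apply measurableSet_Iic, inter_comm, inter_comm (Iic r), Ioc_inter_Iic]
  rcases lt_or_ge r (f c) with hr | hr
  · have hempty : Ioc c d ∩ f ⁻¹' Iic r = ∅ :=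
      eq_empty_of_forall_notMem fun x hx => (hr.trans_le (hfm hx.1.1.le)).not_ge hx.2
    rw [hempty, Ioc_eq_empty (not_lt.2 ((min_le_right _ _).trans hr.le)), measure_empty,
      measure_empty]
  · obtain ⟨e, he, hfe, hset⟩ := exists_Ioc_inter_preimage_Iic hf hfm hcd hr
    rw [hset, min_comm, ← hfe, hμ c hc e he he.1,
      hρ (f c) (left_mem_Icc.2 (hfm hcd)) (f e) ⟨hfm he.1, hfm he.2⟩ (hfm he.1)]
    rfl

lemma measure_flat_eq_zero (hf : Continuous f) (hfm : Monotone f)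
    (hμ : IsStieltjesOn μ (φ ∘ f) (Icc c d)) {q : ℝ} (hq : q ∈ Icc c d) :
    μ {x | x ∈ Ioc q d ∧ f x ≤ f q} = 0 := by
  set T := Icc c d ∩ f ⁻¹' Iic (f q)
  have hTbdd : BddAbove T := ⟨d, fun _ hx => hx.1.2⟩
  have hqT : q ∈ T := ⟨hq, (le_rfl : f q ≤ f q)⟩
  have he : sSup T ∈ T := (isClosed_Icc.inter (isClosed_Iic.preimage hf)).csSup_mem ⟨q, hqT⟩ hTbdd
  have hqe : q ≤ sSup T := le_csSup hTbdd hqT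
  refine measure_mono_null (t := Ioc q (sSup T))
    (fun x hx => ⟨hx.1.1, le_csSup hTbdd ⟨⟨hq.1.trans hx.1.1.le, hx.1.2⟩, hx.2⟩⟩) ?_
  rw [hμ q hq _ he.1 hqe, Function.comp_apply, Function.comp_apply,
    le_antisymm he.2 (hfm hqe), sub_self, ENNReal.ofReal_zero]

lemma ae_restrict_Ioc_forall_lt (hf : Continuous f) (hfm : Monotone f)
    (hμ : IsStieltjesOn μ (φ ∘ f) (Icc c d)) :
    ∀ᵐ x ∂μ.restrict (Ioc c d), ∀ z < x, f z < f x := by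
  rw [ae_restrict_iff' measurableSet_Ioc, ae_iff]
  refine measure_mono_null (fun x hx => ?_) (measure_iUnion_null fun q : ℚ =>
    measure_iUnion_null fun hq : (q : ℝ) ∈ Icc c d => hμ.measure_flat_eq_zero hf hfm hq)
  simp only [mem_ofPred_eq, Classical.not_imp, not_forall, not_lt] at hx
  obtain ⟨hx, z, hzx, hfz⟩ := hx
  obtain ⟨q, hq1, hq2⟩ := exists_rat_btwn (max_lt hzx hx.1)
  simp only [mem_iUnion]
  exact ⟨q, ⟨(le_max_right _ _).trans hq1.le, hq2.le.trans hx.2⟩, ⟨hq2, hx.2⟩,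
    hfz.trans (hfm ((le_max_left _ _).trans hq1.le))⟩

end IsStieltjesOn

lemma setLIntegral_linvp_mul_inv_sq_of_monotone {g : ℝ → ℝ≥0∞} (hf : Continuous f)
    (hfm : Monotone f) (hac : a ≤ c) (hcd : c ≤ d) (hdb : d ≤ b) (hfc : 0 < f c)
    (hμ : IsStieltjesOn μ (fun x => -(f x)⁻¹) (Icc c d)) (hg : MonotoneOn g (Icc c d)) :
    ∫⁻ W in Ioc (f c) (f d), g (linvp a b f W) * ENNReal.ofReal ((W ^ 2)⁻¹) =
      ∫⁻ x in Ioc c d, g x ∂μ := by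
  set ρ := volume.withDensity fun W : ℝ => ENNReal.ofReal ((W ^ 2)⁻¹)
  have hc : c ∈ Icc a b := ⟨hac, hcd.trans hdb⟩
  have hd : d ∈ Icc a b := ⟨hac.trans hcd, hdb⟩
  have hmap : (μ.restrict (Ioc c d)).map f = ρ.restrict (Ioc (f c) (f d)) :=
    hμ.map_restrict_Ioc (φ := fun W => -W⁻¹) hf hfm hcd
      (isStieltjesOn_withDensity_inv_sq.mono fun W hW => hfc.trans_le hW.1)
  have hG : AEMeasurable (fun W => g (linvp a b f W)) (ρ.restrict (Ioc (f c) (f d))) :=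
    aemeasurable_restrict_of_monotoneOn measurableSet_Ioc
      (hg.comp ((monotoneOn_linvp hd).mono Ioc_subset_Iic_self)
        fun W hW => linvp_mem_Icc_of_mem_Ioc (hfm.monotoneOn _) hc hd hW)
  calc ∫⁻ W in Ioc (f c) (f d), g (linvp a b f W) * ENNReal.ofReal ((W ^ 2)⁻¹)
      = ∫⁻ W in Ioc (f c) (f d), g (linvp a b f W) ∂ρ := by
        rw [setLIntegral_withDensity_eq_setLIntegral_mul_non_measurable _ (by fun_prop) _
          measurableSet_Ioc (ae_of_all _ fun _ => ENNReal.ofReal_lt_top)]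
        simp only [Pi.mul_apply, mul_comm]
    _ = ∫⁻ x in Ioc c d, g (linvp a b f (f x)) ∂μ := by
        rw [← hmap] at hG ⊢
        exact lintegral_map' hG hf.aemeasurable
    _ = ∫⁻ x in Ioc c d, g x ∂μ := by
        refine lintegral_congr_ae ?_
        filter_upwards [hμ.ae_restrict_Ioc_forall_lt (φ := fun W => -W⁻¹) hf hfm,
          ae_restrict_mem measurableSet_Ioc] with x hlt hx
        rw [linvp_apply_self ⟨hac.trans hx.1.le, hx.2.trans hdb⟩ hlt]

lemma setLIntegral_linvp_mul_inv_sq {g : ℝ → ℝ≥0∞} (hf : ContinuousOn f (Icc a b))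
    (hfm : MonotoneOn f (Icc a b)) (hac : a ≤ c) (hcd : c ≤ d) (hdb : d ≤ b) (hfc : 0 < f c)
    (hμ : IsStieltjesOn μ (fun x => -(f x)⁻¹) (Icc c d)) (hg : MonotoneOn g (Icc c d)) :
    ∫⁻ W in Ioc (f c) (f d), g (linvp a b f W) * ENNReal.ofReal ((W ^ 2)⁻¹) =
      ∫⁻ x in Ioc c d, g x ∂μ := by
  have hsub : Icc c d ⊆ Icc a b := Icc_subset_Icc hac hdb
  obtain ⟨F, hF, hFm, hFf⟩ := exists_continuous_monotone_eqOn (hac.trans (hcd.trans hdb)) hf hfm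
  have hFc : F c = f c := hFf (hsub (left_mem_Icc.2 hcd))
  have hFd : F d = f d := hFf (hsub (right_mem_Icc.2 hcd))
  have := setLIntegral_linvp_mul_inv_sq_of_monotone (a := a) (b := b) hF hFm hac hcd hdb
    (hFc ▸ hfc) (hμ.congr fun x hx => by simp only [hFf (hsub hx)]) hg
  rwa [hFc, hFd, linvp_congr hFf] at this

/-- Reflect `x ↦ -x`; the reflection turns `(c, d]` into `[c, d)`, which is harmless because
`1 / f` is continuous at `c` and `d`, so `μ` has no atoms there. -/
lemma setLIntegral_linvm_mul_inv_sq {g : ℝ → ℝ≥0∞} (hf : ContinuousOn f (Icc a b))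
    (hfa : AntitoneOn f (Icc a b)) (hpos : ∀ x ∈ Ioo a b, 0 < f x) (hac : a < c) (hcd : c ≤ d)
    (hdb : d < b) (hμ : IsStieltjesOn μ (fun x => (f x)⁻¹) (Ioo a b))
    (hg : AntitoneOn g (Icc c d)) :
    ∫⁻ W in Ioc (f d) (f c), g (linvm a b f W) * ENNReal.ofReal ((W ^ 2)⁻¹) =
      ∫⁻ x in Ioc c d, g x ∂μ := by
  have hneg : ∀ {s t y : ℝ}, y ∈ Icc (-t) (-s) → -y ∈ Icc s t := fun hy =>
    ⟨le_neg_of_le_neg hy.2, neg_le_of_neg_le hy.1⟩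
  have hinv : ContinuousOn (fun x => (f x)⁻¹) (Ioo a b) :=
    (hf.mono Ioo_subset_Icc_self).inv₀ fun x hx => (hpos x hx).ne'
  have hrefl := setLIntegral_linvp_mul_inv_sq (f := fun y => f (-y)) (μ := μ.map Neg.neg)
    (g := fun y => g (-y))
    (hf.comp continuousOn_neg fun _ => hneg) (fun x hx y hy hxy => hfa (hneg hy) (hneg hx)
      (neg_le_neg hxy)) (neg_le_neg hdb.le) (neg_le_neg hcd) (neg_le_neg hac.le)
    (by simpa using hpos d ⟨hac.trans_le hcd, hdb⟩)
    ((hμ.map_neg hinv).mono (Icc_subset_Ioo (neg_lt_neg hdb) (neg_lt_neg hac)))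
    (fun x hx y hy hxy => hg (hneg hy) (hneg hx) (neg_le_neg hxy))
  have hμc : μ {c} = 0 := hμ.measure_singleton_of_mem_Ioo hinv ⟨hac, hcd.trans_lt hdb⟩
  have hμd : μ {d} = 0 := hμ.measure_singleton_of_mem_Ioo hinv ⟨hac.trans_le hcd, hdb⟩
  have hrhs : ∫⁻ y in Ioc (-d) (-c), g (-y) ∂μ.map Neg.neg = ∫⁻ x in Ioc c d, g x ∂μ := by
    have hpre : Neg.neg ⁻¹' Ioc (-d) (-c) = Ico c d := by
      rw [neg_preimage, neg_Ioc, neg_neg, neg_neg]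
    rw [show (Neg.neg : ℝ → ℝ) = MeasurableEquiv.neg ℝ from rfl, MeasurableEquiv.restrict_map,
      lintegral_map_equiv, MeasurableEquiv.neg_apply, hpre,
      Measure.restrict_congr_set (Ico_ae_eq_Ioc' hμc hμd)]
    simp only [neg_neg]
  simp only [neg_neg, hrhs] at hrefl
  simpa only [linvm_eq_neg_linvp] using hrefl

end ChangeOfVariables

lemma setLIntegral_measure_Ioc_add_setLIntegral_measure_Ioo {μ ν : Measure ℝ} {s t : ℝ}
    (hμ : μ (Ioc s t) ≠ ⊤) (hν : ν (Ioc s t) ≠ ⊤) :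
    ∫⁻ x in Ioc s t, ν (Ioc s x) ∂μ + ∫⁻ y in Ioc s t, μ (Ioo s y) ∂ν =
      μ (Ioc s t) * ν (Ioc s t) := by
  have : IsFiniteMeasure (μ.restrict (Ioc s t)) := isFiniteMeasure_restrict.2 hμ
  have : IsFiniteMeasure (ν.restrict (Ioc s t)) := isFiniteMeasure_restrict.2 hν
  have hD : MeasurableSet {p : ℝ × ℝ | p.2 ≤ p.1} := measurableSet_le measurable_snd measurable_fst
  rw [← Measure.restrict_apply_univ, ← Measure.restrict_apply_univ (μ := ν), ← Measure.prod_prod,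
    univ_prod_univ, ← measure_add_measure_compl hD, Measure.prod_apply hD,
    Measure.prod_apply_symm hD.compl]
  congr 1 <;> refine setLIntegral_congr_fun measurableSet_Ioc fun x hx => ?_
  · rw [Measure.restrict_apply' measurableSet_Ioc]
    congr 1
    ext y
    exact ⟨fun h => ⟨h.2, h.1, h.2.trans hx.2⟩, fun h => ⟨h.2.1, h.1⟩⟩
  · rw [Measure.restrict_apply' measurableSet_Ioc]
    congr 1
    ext y
    simp only [mem_inter_iff, mem_preimage, mem_compl_iff, mem_ofPred_eq, not_le, mem_Ioc,
      mem_Ioo]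
    exact ⟨fun h => ⟨h.2, h.1, h.2.le.trans hx.2⟩, fun h => ⟨h.2.1, h.1⟩⟩

lemma IsStieltjesOn.setLIntegral_ofReal_add_setLIntegral_measure_Ioc {v : ℝ → ℝ}
    {μ ν : Measure ℝ} {s t : ℝ} (hst : s ≤ t) (hva : AntitoneOn v (Icc s t)) (hvt : 0 ≤ v t)
    (hν : IsStieltjesOn ν (fun x => -v x) (Icc s t)) :
    ∫⁻ x in Ioc s t, ENNReal.ofReal (v x) ∂μ + ∫⁻ x in Ioc s t, ν (Ioc s x) ∂μ =
      ENNReal.ofReal (v s) * μ (Ioc s t) := by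
  have hs : s ∈ Icc s t := left_mem_Icc.2 hst
  rw [← lintegral_add_right' _ (Monotone.measurable fun x y hxy =>
    measure_mono (Ioc_subset_Ioc_right hxy)).aemeasurable, ← setLIntegral_const]
  refine setLIntegral_congr_fun measurableSet_Ioc fun x hx => ?_
  have hx' : x ∈ Icc s t := Ioc_subset_Icc_self hx
  rw [hν s hs x hx' hx.1.le, neg_sub_neg, ← ENNReal.ofReal_add
    (hvt.trans (hva hx' (right_mem_Icc.2 hst) hx.2)) (sub_nonneg.2 (hva hs hx' hx.1.le)),
    add_sub_cancel]

lemma IsStieltjesOn.setLIntegral_ofReal_eq_setLIntegral_measure_Ioo_add {u : ℝ → ℝ}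
    {μ ν : Measure ℝ} {s t : ℝ} (hst : s ≤ t) (hu : ContinuousOn u (Icc s t))
    (hum : MonotoneOn u (Icc s t)) (hus : 0 ≤ u s) (hμ : IsStieltjesOn μ u (Icc s t)) :
    ∫⁻ x in Ioc s t, ENNReal.ofReal (u x) ∂ν =
      ∫⁻ x in Ioc s t, μ (Ioo s x) ∂ν + ENNReal.ofReal (u s) * ν (Ioc s t) := by
  have hs : s ∈ Icc s t := left_mem_Icc.2 hst
  rw [← setLIntegral_const, ← lintegral_add_right _ measurable_const]
  refine setLIntegral_congr_fun measurableSet_Ioc fun x hx => ?_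
  have hx' : x ∈ Icc s t := Ioc_subset_Icc_self hx
  have hsx : Icc s x ⊆ Icc s t := Icc_subset_Icc_right hx.2
  rw [measure_congr (Ioo_ae_eq_Ioc' ((hμ.mono hsx).measure_singleton hx.1
      ((hu x hx').mono hsx))), hμ s hs x hx' hx.1.le,
    ← ENNReal.ofReal_add (sub_nonneg.2 (hum hs hx' hx.1.le)) hus, sub_add_cancel]

lemma IsStieltjesOn.lintegral_parts {u v : ℝ → ℝ} {μ ν : Measure ℝ} {s t : ℝ} (hst : s ≤ t)
    (hu : ContinuousOn u (Icc s t)) (hum : MonotoneOn u (Icc s t))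
    (hva : AntitoneOn v (Icc s t)) (hus : 0 ≤ u s) (hvt : 0 ≤ v t)
    (hμ : IsStieltjesOn μ u (Icc s t)) (hν : IsStieltjesOn ν (fun x => -v x) (Icc s t)) :
    ∫⁻ x in Ioc s t, ENNReal.ofReal (v x) ∂μ + ENNReal.ofReal (u s * v s) =
      ∫⁻ x in Ioc s t, ENNReal.ofReal (u x) ∂ν + ENNReal.ofReal (u t * v t) := by
  have hs : s ∈ Icc s t := left_mem_Icc.2 hst
  have ht : t ∈ Icc s t := right_mem_Icc.2 hst
  have hut : 0 ≤ u t - u s := sub_nonneg.2 (hum hs ht hst)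
  have hvs : 0 ≤ v s - v t := sub_nonneg.2 (hva hs ht hst)
  have hμS : μ (Ioc s t) = ENNReal.ofReal (u t - u s) := hμ s hs t ht hst
  have hνS : ν (Ioc s t) = ENNReal.ofReal (v s - v t) := by rw [hν s hs t ht hst, neg_sub_neg]
  set Δ₁ := ∫⁻ x in Ioc s t, ν (Ioc s x) ∂μ
  set Δ₂ := ∫⁻ x in Ioc s t, μ (Ioo s x) ∂ν
  have hΔ : Δ₁ + Δ₂ = μ (Ioc s t) * ν (Ioc s t) :=
    setLIntegral_measure_Ioc_add_setLIntegral_measure_Ioo (hμS ▸ ENNReal.ofReal_ne_top)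
      (hνS ▸ ENNReal.ofReal_ne_top)
  have hΔ₁ : Δ₁ ≠ ⊤ := by
    refine ne_top_of_le_ne_top ?_ (le_self_add : Δ₁ ≤ Δ₁ + Δ₂)
    rw [hΔ, hμS, hνS]
    exact ENNReal.mul_ne_top ENNReal.ofReal_ne_top ENNReal.ofReal_ne_top
  refine (ENNReal.add_left_inj hΔ₁).1 ?_
  -- after adding `Δ₁`, both sides are `ofReal (u t * v s)`
  calc _ = (∫⁻ x in Ioc s t, ENNReal.ofReal (v x) ∂μ + Δ₁) + ENNReal.ofReal (u s * v s) := by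
        ring
    _ = ENNReal.ofReal ((u t - u s) * (v s - v t)) + ENNReal.ofReal (u s) * ENNReal.ofReal
          (v s - v t) + ENNReal.ofReal (u t * v t) := by
        rw [hν.setLIntegral_ofReal_add_setLIntegral_measure_Ioc (μ := μ) hst hva hvt, hμS,
          ← ENNReal.ofReal_mul (hvt.trans (by linarith)), ← ENNReal.ofReal_mul hus,
          ← ENNReal.ofReal_add (by positivity) (mul_nonneg hus hvs),
          ← ENNReal.ofReal_add (mul_nonneg (hvt.trans (by linarith)) hut)
            (mul_nonneg hus (hvt.trans (by linarith))),
          ← ENNReal.ofReal_add (by positivity) (mul_nonneg (hus.trans (by linarith)) hvt)]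
        congr 1
        ring
    _ = _ := by
        rw [ENNReal.ofReal_mul hut, ← hμS, ← hνS, ← hΔ,
          hμ.setLIntegral_ofReal_eq_setLIntegral_measure_Ioo_add hst hu hum hus]
        ring

lemma IsStieltjesOn.toReal_lintegral_parts {u v : ℝ → ℝ} {μ ν : Measure ℝ} {s t : ℝ}
    (hst : s ≤ t) (hu : ContinuousOn u (Icc s t)) (hum : MonotoneOn u (Icc s t))
    (hva : AntitoneOn v (Icc s t)) (hus : 0 ≤ u s) (hvt : 0 ≤ v t)
    (hμ : IsStieltjesOn μ u (Icc s t)) (hν : IsStieltjesOn ν (fun x => -v x) (Icc s t)) :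
    ∫⁻ x in Ioc s t, ENNReal.ofReal (v x) ∂μ ≠ ⊤ ∧ ∫⁻ x in Ioc s t, ENNReal.ofReal (u x) ∂ν ≠ ⊤ ∧
      (∫⁻ x in Ioc s t, ENNReal.ofReal (v x) ∂μ).toReal + u s * v s =
        (∫⁻ x in Ioc s t, ENNReal.ofReal (u x) ∂ν).toReal + u t * v t := by
  have hs : s ∈ Icc s t := left_mem_Icc.2 hst
  have ht : t ∈ Icc s t := right_mem_Icc.2 hst
  have hparts := hμ.lintegral_parts hst hu hum hva hus hvt hν
  have hP : ∫⁻ x in Ioc s t, ENNReal.ofReal (v x) ∂μ ≠ ⊤ := by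
    refine ne_top_of_le_ne_top ?_ (setLIntegral_mono' measurableSet_Ioc fun x hx =>
      ENNReal.ofReal_le_ofReal (hva hs (Ioc_subset_Icc_self hx) hx.1.le))
    rw [setLIntegral_const, hμ s hs t ht hst]
    exact ENNReal.mul_ne_top ENNReal.ofReal_ne_top ENNReal.ofReal_ne_top
  have hQ : ∫⁻ x in Ioc s t, ENNReal.ofReal (u x) ∂ν ≠ ⊤ :=
    ne_top_of_le_ne_top (hparts ▸ ENNReal.add_ne_top.2 ⟨hP, ENNReal.ofReal_ne_top⟩) le_self_add
  refine ⟨hP, hQ, ?_⟩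
  have hvs : 0 ≤ v s := hvt.trans (hva hs ht hst)
  have hut : 0 ≤ u t := hus.trans (hum hs ht hst)
  have := congrArg ENNReal.toReal hparts
  rwa [ENNReal.toReal_add hP ENNReal.ofReal_ne_top, ENNReal.toReal_add hQ ENNReal.ofReal_ne_top,
    ENNReal.toReal_ofReal (mul_nonneg hus hvs), ENNReal.toReal_ofReal (mul_nonneg hut hvt)] at this


section Walras

variable {a b : ℝ} {lm lp : ℝ → ℝ}

lemma min_le_VWal (hlm : ContinuousOn lm (Icc a b)) (hlp : ContinuousOn lp (Icc a b)) {x : ℝ}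
    (hx : x ∈ Icc a b) : min (lm x) (lp x) ≤ VWal a b lm lp :=
  le_csSup (isCompact_Icc.bddAbove_image (hlm.inf hlp)) ⟨x, hx, rfl⟩

lemma VWal_eq_of_crossing (hlm : AntitoneOn lm (Icc a b)) (hlp : MonotoneOn lp (Icc a b)) {x : ℝ}
    (hx : x ∈ Icc a b) (hcross : lm x = lp x) : VWal a b lm lp = lm x := by
  refine IsGreatest.csSup_eq ⟨⟨x, hx, min_eq_left hcross.le⟩, ?_⟩
  rintro _ ⟨y, hy, rfl⟩
  rcases le_total y x with hyx | hxy
  · exact (min_le_right _ _).trans ((hlp hy hx hyx).trans hcross.ge)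
  · exact (min_le_left _ _).trans (hlm hx hy hxy)

lemma exists_crossing_mem_Ioo (hlm : ContinuousOn lm (Icc a b)) (hlp : ContinuousOn lp (Icc a b))
    {Jm Jp V : ℝ} (hJm : Jm ∈ Icc a b) (hJp : Jp ∈ Icc a b) (hJmJp : Jm ≤ Jp)
    (hlmJm : lm Jm = V) (hlpJp : lp Jp = V) (hV : VWal a b lm lp < V) :
    ∃ x ∈ Ioo Jm Jp, lm x = lp x := by
  have hlpJm : lp Jm < V := not_le.1 fun h =>
    (min_le_VWal hlm hlp hJm).not_gt (by rwa [hlmJm, min_eq_left h])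
  have hlmJp : lm Jp < V := not_le.1 fun h =>
    (min_le_VWal hlm hlp hJp).not_gt (by rwa [hlpJp, min_eq_right h])
  have hsub : Icc Jm Jp ⊆ Icc a b := Icc_subset_Icc hJm.1 hJp.2
  obtain ⟨x, hx, hx0⟩ := intermediate_value_Ioo hJmJp ((hlp.sub hlm).mono hsub)
    (show (0 : ℝ) ∈ Ioo (lp Jm - lm Jm) (lp Jp - lm Jp) by
      constructor <;> linarith)
  exact ⟨x, hx, (sub_eq_zero.1 hx0).symm⟩

end Walras

namespace A3

variable {a b : ℝ} {lm lp : ℝ → ℝ} {μdim μdip : Measure ℝ}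

lemma exists_crossing (hA3 : A3 a b lm lp) (hab : a ≤ b) {V Jm Jp : ℝ}
    (hV1 : VWal a b lm lp < V) (hV2 : V ≤ Vmax a b lm lp) (hJm : Jm = linvm a b lm V)
    (hJp : Jp = linvp a b lp V) (haJm : a < Jm) (hJmJp : Jm < Jp) (hJpb : Jp < b) :
    lm Jm = V ∧ lp Jp = V ∧ ∃ x ∈ Ioo Jm Jp, lm x = lp x ∧ VWal a b lm lp = lm x := by
  obtain ⟨hlmc, hlpc, hlma, hlpm, -, -⟩ := hA3
  have hlmJm : lm Jm = V := hJm ▸ apply_linvm hlmc hab (hV2.trans (min_le_left _ _))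
    (hJm ▸ hJmJp.trans hJpb)
  have hlpJp : lp Jp = V := hJp ▸ apply_linvp hlpc hab (hV2.trans (min_le_right _ _))
    (hJp ▸ haJm.trans hJmJp)
  obtain ⟨x, hx, hcross⟩ := exists_crossing_mem_Ioo hlmc hlpc ⟨haJm.le, (hJmJp.trans hJpb).le⟩
    ⟨(haJm.trans hJmJp).le, hJpb.le⟩ hJmJp.le hlmJm hlpJp hV1
  exact ⟨hlmJm, hlpJp, x, hx, hcross,
    VWal_eq_of_crossing hlma hlpm ⟨(haJm.trans hx.1).le, (hx.2.trans hJpb).le⟩ hcross⟩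

lemma toReal_lintegral_inv_parts (hA3 : A3 a b lm lp) (hA5 : A5 a b lm lp)
    (hdim : IsStieltjesOn μdim (fun x => (lm x)⁻¹) (Ioo a b))
    (hdip : IsStieltjesOn μdip (fun x => -(lp x)⁻¹) (Ioo a b)) {s t : ℝ} (has : a < s)
    (hst : s ≤ t) (htb : t < b) :
    ∫⁻ x in Ioc s t, ENNReal.ofReal (lp x)⁻¹ ∂μdim ≠ ⊤ ∧
      ∫⁻ x in Ioc s t, ENNReal.ofReal (lm x)⁻¹ ∂μdip ≠ ⊤ ∧
      (∫⁻ x in Ioc s t, ENNReal.ofReal (lp x)⁻¹ ∂μdim).toReal + (lm s)⁻¹ * (lp s)⁻¹ =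
        (∫⁻ x in Ioc s t, ENNReal.ofReal (lm x)⁻¹ ∂μdip).toReal + (lm t)⁻¹ * (lp t)⁻¹ := by
  obtain ⟨hlmc, -, hlma, hlpm, -, -⟩ := hA3
  have hsub : Icc s t ⊆ Ioo a b := Icc_subset_Ioo has htb
  have hI : Icc s t ⊆ Icc a b := hsub.trans Ioo_subset_Icc_self
  have hlm : ∀ x ∈ Icc s t, 0 < lm x := fun x hx => (hA5 x (hsub hx)).1
  have hlp : ∀ x ∈ Icc s t, 0 < lp x := fun x hx => (hA5 x (hsub hx)).2
  exact (hdim.mono hsub).toReal_lintegral_parts hst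
    ((hlmc.mono hI).inv₀ fun x hx => (hlm x hx).ne')
    (fun x hx y hy hxy => inv_anti₀ (hlm y hy) (hlma (hI hx) (hI hy) hxy))
    (fun x hx y hy hxy => inv_anti₀ (hlp x hx) (hlpm (hI hx) (hI hy) hxy))
    (inv_nonneg.2 (hlm s (left_mem_Icc.2 hst)).le)
    (inv_nonneg.2 (hlp t (right_mem_Icc.2 hst)).le) (hdip.mono hsub)

lemma Phi_eq_lintegral_add (hA3 : A3 a b lm lp) (hab : a ≤ b) {V : ℝ} (hVa : V ≤ lm a)
    (hVb : V ≤ lp b) :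
    Phi a b lm lp V = (∫⁻ W in Ioc (VWal a b lm lp) V,
        ENNReal.ofReal (lp (linvm a b lm W))⁻¹ * ENNReal.ofReal ((W ^ 2)⁻¹)) +
      ∫⁻ W in Ioc (VWal a b lm lp) V,
        ENNReal.ofReal (lm (linvp a b lp W))⁻¹ * ENNReal.ofReal ((W ^ 2)⁻¹) := by
  obtain ⟨-, -, hlma, -, hlm0, hlp0⟩ := hA3
  have hbI : b ∈ Icc a b := right_mem_Icc.2 hab
  have hBmeas : AEMeasurable (fun W => ENNReal.ofReal (lm (linvp a b lp W))⁻¹)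
      (volume.restrict (Ioc (VWal a b lm lp) V)) :=
    (aemeasurable_restrict_of_antitoneOn measurableSet_Ioc
      ((hlma.comp_MonotoneOn (monotoneOn_linvp hbI) fun W hW => linvp_mem_Icc hbI hW).mono
        fun W hW => hW.2.trans hVb)).inv.ennreal_ofReal
  rw [Phi, ← lintegral_add_right' _ (g := fun W =>
    ENNReal.ofReal (lm (linvp a b lp W))⁻¹ * ENNReal.ofReal ((W ^ 2)⁻¹)) (hBmeas.mul
      (by fun_prop : Measurable fun W : ℝ => ENNReal.ofReal ((W ^ 2)⁻¹)).aemeasurable)]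
  refine setLIntegral_congr_fun measurableSet_Ioc fun W hW => ?_
  have hA := inv_nonneg.2 (hlp0 _ (linvm_mem_Icc hab (hW.2.trans hVa)))
  have hB := inv_nonneg.2 (hlm0 _ (linvp_mem_Icc hbI (hW.2.trans hVb)))
  rw [add_mul, ENNReal.ofReal_add (mul_nonneg hA (by positivity))
    (mul_nonneg hB (by positivity)), ENNReal.ofReal_mul hA, ENNReal.ofReal_mul hB]

lemma Phi_eq_add (hA3 : A3 a b lm lp) (hA5 : A5 a b lm lp)
    (hdim : IsStieltjesOn μdim (fun x => (lm x)⁻¹) (Ioo a b))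
    (hdip : IsStieltjesOn μdip (fun x => -(lp x)⁻¹) (Ioo a b)) {V Jm Jp x : ℝ} (haJm : a < Jm)
    (hx : x ∈ Ioo Jm Jp) (hJpb : Jp < b) (hlmJm : lm Jm = V) (hlpJp : lp Jp = V)
    (hcross : lm x = lp x) (hVW : VWal a b lm lp = lm x) :
    Phi a b lm lp V = (∫⁻ y in Ioc Jm x, ENNReal.ofReal (lp y)⁻¹ ∂μdim) +
      ∫⁻ y in Ioc x Jp, ENNReal.ofReal (lm y)⁻¹ ∂μdip := by
  have hxb : x < b := hx.2.trans hJpb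
  have hab : a ≤ b := (haJm.trans (hx.1.trans hxb)).le
  have hJmx : Icc Jm x ⊆ Ioo a b := Icc_subset_Ioo haJm hxb
  have hxJp : Icc x Jp ⊆ Ioo a b := Icc_subset_Ioo (haJm.trans hx.1) hJpb
  have hVa : V ≤ lm a :=
    hlmJm ▸ hA3.2.2.1 (left_mem_Icc.2 hab) ⟨haJm.le, (hx.1.trans hxb).le⟩ haJm.le
  have hVb : V ≤ lp b := hlpJp ▸ hA3.2.2.2.1 ⟨(haJm.trans (hx.1.trans hx.2)).le, hJpb.le⟩
    (right_mem_Icc.2 hab) hJpb.le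
  rw [hA3.Phi_eq_lintegral_add hab hVa hVb, hVW]
  obtain ⟨hlmc, hlpc, hlma, hlpm, -, -⟩ := hA3
  refine congrArg₂ (fun p q : ℝ≥0∞ => p + q) ?_ ?_
  · rw [← hlmJm]
    exact setLIntegral_linvm_mul_inv_sq hlmc hlma (fun y hy => (hA5 y hy).1) haJm hx.1.le
      hxb hdim fun y hy z hz hyz => ENNReal.ofReal_le_ofReal <| inv_anti₀
        (hA5 y (hJmx hy)).2 (hlpm (Ioo_subset_Icc_self (hJmx hy))
          (Ioo_subset_Icc_self (hJmx hz)) hyz)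
  · rw [hcross, ← hlpJp]
    exact setLIntegral_linvp_mul_inv_sq hlpc hlpm (haJm.trans hx.1).le hx.2.le hJpb.le
      (hcross ▸ (hA5 x (hJmx (right_mem_Icc.2 hx.1.le))).1) (hdip.mono hxJp)
      fun y hy z hz hyz => ENNReal.ofReal_le_ofReal <| inv_anti₀
        (hA5 z (hxJp hz)).1 (hlma (Ioo_subset_Icc_self (hxJp hy))
          (Ioo_subset_Icc_self (hxJp hz)) hyz)

end A3

theorem stmt13_general (a b : ℝ) (hab : a < b) (lm lp : ℝ → ℝ)
    (hA3 : A3 a b lm lp) (hA5 : A5 a b lm lp)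
    (μdim μdip : MeasureTheory.Measure ℝ)
    (hdim : ∀ x y : ℝ, a < x → x ≤ y → y < b →
      μdim (Set.Ioc x y) = ENNReal.ofReal ((lm y)⁻¹ - (lm x)⁻¹))
    (hdip : ∀ x y : ℝ, a < x → x ≤ y → y < b →
      μdip (Set.Ioc x y) = ENNReal.ofReal ((lp x)⁻¹ - (lp y)⁻¹))
    (V : ℝ) (hV1 : VWal a b lm lp < V) (hV2 : V ≤ Vmax a b lm lp)
    (Jm Jp : ℝ) (hJm : Jm = linvm a b lm V) (hJp : Jp = linvp a b lp V)
    (haJm : a < Jm) (hJmJp : Jm < Jp) (hJpb : Jp < b) :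
    Phi a b lm lp V ≠ ⊤ ∧
    (VWal a b lm lp ^ 2)⁻¹ - (Phi a b lm lp V).toReal =
      (lm Jm * lm Jp)⁻¹ -
        (∫⁻ x in Set.Ioc Jm Jp, ENNReal.ofReal ((lp x)⁻¹) ∂μdim).toReal ∧
    (VWal a b lm lp ^ 2)⁻¹ - (Phi a b lm lp V).toReal =
      (lp Jm * lp Jp)⁻¹ -
        (∫⁻ x in Set.Ioc Jm Jp, ENNReal.ofReal ((lm x)⁻¹) ∂μdip).toReal := by
  obtain ⟨hlmJm, hlpJp, x, hx, hcross, hVW⟩ :=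
    hA3.exists_crossing hab.le hV1 hV2 hJm hJp haJm hJmJp hJpb
  have hdim' : IsStieltjesOn μdim (fun x => (lm x)⁻¹) (Ioo a b) :=
    fun x hx y hy hxy => hdim x y hx.1 hxy hy.2
  have hdip' : IsStieltjesOn μdip (fun x => -(lp x)⁻¹) (Ioo a b) :=
    fun x hx y hy hxy => by rw [neg_sub_neg]; exact hdip x y hx.1 hxy hy.2
  obtain ⟨hP₁, hQ₁, hparts₁⟩ :=
    hA3.toReal_lintegral_inv_parts hA5 hdim' hdip' haJm hx.1.le (hx.2.trans hJpb)
  obtain ⟨hP₂, hQ₂, hparts₂⟩ :=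
    hA3.toReal_lintegral_inv_parts hA5 hdim' hdip' (haJm.trans hx.1) hx.2.le hJpb
  have hsplit : ∀ (ν : Measure ℝ) (g : ℝ → ℝ≥0∞), ∫⁻ y in Ioc Jm Jp, g y ∂ν =
      (∫⁻ y in Ioc Jm x, g y ∂ν) + ∫⁻ y in Ioc x Jp, g y ∂ν := fun ν g => by
    rw [← Ioc_union_Ioc_eq_Ioc hx.1.le hx.2.le,
      lintegral_union measurableSet_Ioc (Ioc_disjoint_Ioc_of_le le_rfl)]
  have hVW2 : (VWal a b lm lp ^ 2)⁻¹ = (lm x)⁻¹ * (lp x)⁻¹ := by rw [hVW, ← hcross, sq, mul_inv]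
  rw [hA3.Phi_eq_add hA5 hdim' hdip' haJm hx hJpb hlmJm hlpJp hcross hVW, hsplit, hsplit,
    ENNReal.toReal_add hP₁ hQ₂, ENNReal.toReal_add hP₁ hP₂, ENNReal.toReal_add hQ₁ hQ₂, hVW2,
    mul_inv, mul_inv]
  rw [hlmJm] at hparts₁ ⊢
  rw [hlpJp] at hparts₂ ⊢
  exact ⟨ENNReal.add_ne_top.2 ⟨hP₁, hQ₂⟩, by linarith, by linarith⟩

/-- assume (A3), (A5) and (A7).  For every `V ∈ (V_W, V_max]` with
`I₋ < λ₋⁻¹(V) < λ₊⁻¹(V) < I₊` one has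
`V_W⁻² − Φ(V) = Λ₋(λ₋⁻¹(V), λ₊⁻¹(V)) = Λ₊(λ₋⁻¹(V), λ₊⁻¹(V))`.
Here `μdim` is the (positive) Lebesgue-Stieltjes measure of the nondecreasing function
`1/λ₋` on `(a,b)` and `μdip` that of the nondecreasing function `−1/λ₊`, so that
`Λ₋(J₋,J₊) = 1/(λ₋(J₋)λ₋(J₊)) − ∫_{(J₋,J₊]} (1/λ₊) d(1/λ₋)` and
`Λ₊(J₋,J₊) = 1/(λ₊(J₋)λ₊(J₊)) + ∫_{(J₋,J₊]} (1/λ₋) d(1/λ₊)`. -/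
theorem stmt13 (a b : ℝ) (hab : a < b) (lm lp : ℝ → ℝ)
    (hA3 : A3 a b lm lp) (hA5 : A5 a b lm lp)
    (hA7 : VWal a b lm lp < Vmax a b lm lp)
    (μdim μdip : MeasureTheory.Measure ℝ)
    (hdim : ∀ x y : ℝ, a < x → x ≤ y → y < b →
      μdim (Set.Ioc x y) = ENNReal.ofReal ((lm y)⁻¹ - (lm x)⁻¹))
    (hdip : ∀ x y : ℝ, a < x → x ≤ y → y < b →
      μdip (Set.Ioc x y) = ENNReal.ofReal ((lp x)⁻¹ - (lp y)⁻¹))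
    (V : ℝ) (hV1 : VWal a b lm lp < V) (hV2 : V ≤ Vmax a b lm lp)
    (Jm Jp : ℝ) (hJm : Jm = linvm a b lm V) (hJp : Jp = linvp a b lp V)
    (haJm : a < Jm) (hJmJp : Jm < Jp) (hJpb : Jp < b) :
    Phi a b lm lp V ≠ ⊤ ∧
    (VWal a b lm lp ^ 2)⁻¹ - (Phi a b lm lp V).toReal =
      (lm Jm * lm Jp)⁻¹ -
        (∫⁻ x in Set.Ioc Jm Jp, ENNReal.ofReal ((lp x)⁻¹) ∂μdim).toReal ∧
    (VWal a b lm lp ^ 2)⁻¹ - (Phi a b lm lp V).toReal =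
      (lp Jm * lp Jp)⁻¹ -
        (∫⁻ x in Set.Ioc Jm Jp, ENNReal.ofReal ((lm x)⁻¹) ∂μdip).toReal :=
  stmt13_general a b hab lm lp hA3 hA5 μdim μdip hdim hdip V hV1 hV2 Jm Jp hJm hJp haJm hJmJp hJpb
end
end

section
/- Consider the uniform Stigler–Luckock model with Ī = [0,1], λ₋(x) = 1 − x and λ₊(x) = x. Then V_W = 1/2, Φ(V) = 4 − 2(V⁻¹ + log(V⁻¹ − 1)) for all V ∈ (1/2, 1), and there is a unique z ∈ (0,∞) with e^{−z} − z + 1 = 0; this z satisfies z > 1, and V_L = 1/z, so that the competitive window is J^c = (1 − 1/z, 1/z), i.e. 1 − J^c₋ = J^c₊ = V_L. -/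
open MeasureTheory Set
open scoped ENNReal

noncomputable section

/-!
In the uniform model the inverses are explicit, `λ₋⁻¹(W) = 1 - W` and `λ₊⁻¹(W) = W`, so `Φ` is
the integral of `2 / ((1 - W) W²)`, whose antiderivative is `-2 (W⁻¹ + log (W⁻¹ - 1))`.
Hence `Φ(V) ≤ V_W⁻² = 4` says `-u ≤ log (u - 1)` for `u = V⁻¹`, i.e. `e^{-u} - u + 1 ≤ 0`.
As `u ↦ e^{-u} - u + 1` is strictly decreasing with root `z`, this is `u ≥ z`, i.e. `V ≤ 1/z`.
-/

open Real

lemma strictAnti_exp_neg_sub_add_one : StrictAnti (fun u : ℝ => exp (-u) - u + 1) := by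
  intro u v huv
  have : exp (-v) < exp (-u) := exp_lt_exp.2 (neg_lt_neg huv)
  dsimp only
  linarith

lemma existsUnique_pos_exp_neg_sub_add_one_eq_zero :
    ∃! z : ℝ, 0 < z ∧ exp (-z) - z + 1 = 0 := by
  have hcont : ContinuousOn (fun u : ℝ => exp (-u) - u + 1) (Icc 1 2) := by fun_prop
  have hsign : (0 : ℝ) ∈ Icc (exp (-2) - 2 + 1) (exp (-1) - 1 + 1) := by
    have : exp (-2 : ℝ) < 1 := exp_lt_one_iff.2 (by norm_num)
    constructor <;> linarith [exp_pos (-1)]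
  obtain ⟨z, hz, hroot⟩ := intermediate_value_Icc' (by norm_num) hcont hsign
  refine ⟨z, ⟨by linarith [hz.1], hroot⟩, fun y hy => ?_⟩
  exact strictAnti_exp_neg_sub_add_one.injective (hy.2.trans hroot.symm)

lemma mem_Ioo_of_exp_neg_sub_add_one_eq_zero {z : ℝ} (hz : exp (-z) - z + 1 = 0) :
    z ∈ Ioo 1 2 := by
  have hz₁ : 1 < z := by linarith [exp_pos (-z)]
  have : exp (-z) < 1 := exp_lt_one_iff.2 (by linarith)
  exact ⟨hz₁, by linarith⟩

lemma add_log_sub_one_nonneg_iff {z u : ℝ} (hz : exp (-z) - z + 1 = 0) (hu : 1 < u) :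
    0 ≤ u + log (u - 1) ↔ z ≤ u := by
  calc 0 ≤ u + log (u - 1) ↔ -u ≤ log (u - 1) := by constructor <;> intro h <;> linarith
    _ ↔ exp (-u) ≤ u - 1 := le_log_iff_exp_le (by linarith)
    _ ↔ exp (-u) - u + 1 ≤ exp (-z) - z + 1 := by constructor <;> intro h <;> linarith
    _ ↔ z ≤ u := strictAnti_exp_neg_sub_add_one.le_iff_ge

lemma Phi_mono (a b : ℝ) (lm lp : ℝ → ℝ) : Monotone (Phi a b lm lp) :=
  fun _ _ hVV' => lintegral_mono_set (Ioc_subset_Ioc_right hVV')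

lemma lintegral_Ioc_ofReal_eq_sub_of_hasDerivAt {f F : ℝ → ℝ} {a b : ℝ} (hab : a ≤ b)
    (hderiv : ∀ x ∈ Icc a b, HasDerivAt F (f x) x) (hcont : ContinuousOn f (Icc a b))
    (hnonneg : ∀ x ∈ Ioc a b, 0 ≤ f x) :
    ∫⁻ x in Ioc a b, ENNReal.ofReal (f x) = ENNReal.ofReal (F b - F a) := by
  have hint : IntegrableOn f (Ioc a b) := hcont.integrableOn_Icc.mono_set Ioc_subset_Icc_self
  have hnonneg_ae : 0 ≤ᵐ[volume.restrict (Ioc a b)] f :=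
    (ae_restrict_iff' measurableSet_Ioc).2 (ae_of_all _ hnonneg)
  rw [← ofReal_integral_eq_lintegral_ofReal hint hnonneg_ae,
    ← intervalIntegral.integral_of_le hab,
    intervalIntegral.integral_eq_sub_of_hasDerivAt (by rwa [uIcc_of_le hab])
      (hcont.intervalIntegrable_of_Icc hab)]

lemma VWal_uniform : VWal 0 1 (fun x => 1 - x) (fun x => x) = 1 / 2 := by
  refine IsGreatest.csSup_eq ⟨⟨1 / 2, by norm_num, by norm_num⟩, ?_⟩
  rintro _ ⟨x, -, rfl⟩
  rcases le_total x (1 / 2) with h | h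
  · exact (min_le_right _ _).trans h
  · exact (min_le_left _ _).trans (by linarith)

lemma linvm_uniform {W : ℝ} (hW : W ∈ Icc (0 : ℝ) 1) :
    linvm 0 1 (fun x => 1 - x) W = 1 - W := by
  have : {x | x ∈ Icc (0 : ℝ) 1 ∧ W ≤ 1 - x} = Icc 0 (1 - W) := by
    ext x
    simp only [mem_ofPred_eq, mem_Icc]
    grind
  rw [linvm, this, csSup_Icc (by linarith [hW.2])]

lemma linvp_uniform {W : ℝ} (hW : W ∈ Icc (0 : ℝ) 1) :
    linvp 0 1 (fun x => x) W = W := by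
  have : {x | x ∈ Icc (0 : ℝ) 1 ∧ W ≤ x} = Icc W 1 := by
    ext x
    simp only [mem_ofPred_eq, mem_Icc]
    grind
  rw [linvp, this, csInf_Icc hW.2]

lemma hasDerivAt_neg_two_mul_inv_add_log_inv_sub_one {x : ℝ} (hx0 : 0 < x) (hx1 : x < 1) :
    HasDerivAt (fun W : ℝ => -2 * (W⁻¹ + log (W⁻¹ - 1)))
      (((1 - x)⁻¹ + (1 - x)⁻¹) * (x ^ 2)⁻¹) x := by
  have hinv : HasDerivAt (fun W : ℝ => W⁻¹) (-(x ^ 2)⁻¹) x := hasDerivAt_inv hx0.ne'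
  have hpos : 0 < x⁻¹ - 1 := sub_pos.2 (one_lt_inv₀ hx0 |>.2 hx1)
  refine ((hinv.add ((hinv.sub_const 1).log hpos.ne')).const_mul (-2 : ℝ)).congr_deriv ?_
  have h1x : (1 : ℝ) - x ≠ 0 := by linarith
  rw [show x⁻¹ - 1 = (1 - x) / x by field_simp]
  field_simp
  ring

lemma Phi_uniform {V : ℝ} (hV : V ∈ Ioo (1 / 2 : ℝ) 1) :
    Phi 0 1 (fun x => 1 - x) (fun x => x) V =
      ENNReal.ofReal (4 - 2 * (V⁻¹ + log (V⁻¹ - 1))) := by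
  obtain ⟨hV₀, hV₁⟩ := hV
  have hbounds : ∀ W ∈ Icc (1 / 2 : ℝ) V, 0 < W ∧ W < 1 := fun W hW =>
    ⟨by linarith [hW.1], hW.2.trans_lt hV₁⟩
  have hintegrand : Phi 0 1 (fun x => 1 - x) (fun x => x) V =
      ∫⁻ W in Ioc (1 / 2 : ℝ) V, ENNReal.ofReal (((1 - W)⁻¹ + (1 - W)⁻¹) * (W ^ 2)⁻¹) := by
    rw [Phi, VWal_uniform]
    refine setLIntegral_congr_fun measurableSet_Ioc fun W hW => ?_
    have hW01 : W ∈ Icc (0 : ℝ) 1 := by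
      have := hbounds W (Ioc_subset_Icc_self hW)
      exact ⟨this.1.le, this.2.le⟩
    rw [linvm_uniform hW01, linvp_uniform hW01]
  rw [hintegrand, lintegral_Ioc_ofReal_eq_sub_of_hasDerivAt hV₀.le
    (fun W hW => hasDerivAt_neg_two_mul_inv_add_log_inv_sub_one (hbounds W hW).1 (hbounds W hW).2)]
  · congr 1
    norm_num
    ring
  · have hrecip : ContinuousOn (fun W : ℝ => (1 - W)⁻¹) (Icc (1 / 2) V) :=
      (continuousOn_const.sub continuousOn_id).inv₀ fun W hW => (sub_pos.2 (hbounds W hW).2).ne'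
    exact (hrecip.add hrecip).mul
      ((continuousOn_id.pow 2).inv₀ fun W hW => pow_ne_zero 2 (hbounds W hW).1.ne')
  · intro W hW
    have := hbounds W (Ioc_subset_Icc_self hW)
    have : 0 < 1 - W := by linarith
    positivity

lemma Phi_uniform_le_four_iff {z : ℝ} (hz : exp (-z) - z + 1 = 0) {V : ℝ}
    (hV : V ∈ Ioo (1 / 2 : ℝ) 1) :
    Phi 0 1 (fun x => 1 - x) (fun x => x) V ≤ ENNReal.ofReal 4 ↔ V ≤ 1 / z := by
  have hV₀ : 0 < V := by linarith [hV.1]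
  have hz₀ : 0 < z := by linarith [(mem_Ioo_of_exp_neg_sub_add_one_eq_zero hz).1]
  rw [Phi_uniform hV, ENNReal.ofReal_le_ofReal_iff (by norm_num), le_div_iff₀ hz₀,
    ← le_inv_mul_iff₀ hV₀, mul_one, ← add_log_sub_one_nonneg_iff hz (one_lt_inv₀ hV₀ |>.2 hV.2)]
  constructor <;> intro h <;> linarith

lemma VLuc_uniform {z : ℝ} (hz : exp (-z) - z + 1 = 0) :
    VLuc 0 1 (fun x => 1 - x) (fun x => x) = 1 / z := by
  obtain ⟨hz₁, hz₂⟩ := mem_Ioo_of_exp_neg_sub_add_one_eq_zero hz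
  have hz_lt : 1 / z < 1 := by rw [div_lt_one (by linarith)]; exact hz₁
  have hhalf_lt : 1 / 2 < 1 / z := one_div_lt_one_div_of_lt (by linarith) hz₂
  rw [VLuc, VWal_uniform, Vmax, sub_zero, min_self, show (((1 : ℝ) / 2) ^ 2)⁻¹ = 4 by norm_num]
  refine IsGreatest.csSup_eq ⟨⟨⟨hhalf_lt.le, hz_lt.le⟩,
    (Phi_uniform_le_four_iff hz ⟨hhalf_lt, hz_lt⟩).2 le_rfl⟩, ?_⟩
  rintro V ⟨⟨-, hV₁⟩, hPhi⟩
  by_contra! hzV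
  obtain ⟨W, hzW, hWV⟩ := exists_between hzV
  have hW : W ∈ Ioo (1 / 2 : ℝ) 1 := ⟨hhalf_lt.trans hzW, hWV.trans_le hV₁⟩
  have hW_le := (Phi_uniform_le_four_iff hz hW).1 ((Phi_mono _ _ _ _ hWV.le).trans hPhi)
  exact hW_le.not_gt hzW

/-- the uniform model: for the uniform Stigler-Luckock model on
`[0,1]` with `λ₋(x) = 1 − x` and `λ₊(x) = x`, one has `V_W = 1/2`,
`Φ(V) = 4 − 2(V⁻¹ + log(V⁻¹ − 1))` for `V ∈ (1/2, 1)`, there is a unique `z > 0` with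
`e^{−z} − z + 1 = 0`; it satisfies `z > 1`, `V_L = 1/z`, and the competitive window is
`J^c = (1 − 1/z, 1/z)`, i.e. `1 − J^c₋ = J^c₊ = V_L`. -/
theorem stmt16 :
    VWal 0 1 (fun x => 1 - x) (fun x => x) = 1 / 2 ∧
    (∀ V ∈ Set.Ioo (1 / 2 : ℝ) 1,
      Phi 0 1 (fun x => 1 - x) (fun x => x) V =
        ENNReal.ofReal (4 - 2 * (V⁻¹ + Real.log (V⁻¹ - 1)))) ∧
    (∃! z : ℝ, 0 < z ∧ Real.exp (-z) - z + 1 = 0) ∧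
    ∀ z : ℝ, 0 < z → Real.exp (-z) - z + 1 = 0 →
      1 < z ∧
      VLuc 0 1 (fun x => 1 - x) (fun x => x) = 1 / z ∧
      linvm 0 1 (fun x => 1 - x) (VLuc 0 1 (fun x => 1 - x) (fun x => x)) = 1 - 1 / z ∧
      linvp 0 1 (fun x => x) (VLuc 0 1 (fun x => 1 - x) (fun x => x)) = 1 / z := by
  refine ⟨VWal_uniform, fun V hV => Phi_uniform hV,
    existsUnique_pos_exp_neg_sub_add_one_eq_zero, fun z hz hroot => ?_⟩
  have hz₁ := (mem_Ioo_of_exp_neg_sub_add_one_eq_zero hroot).1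
  have hVL : (1 / z : ℝ) ∈ Icc (0 : ℝ) 1 :=
    ⟨by positivity, by rw [div_le_one hz]; exact hz₁.le⟩
  rw [VLuc_uniform hroot]
  exact ⟨hz₁, rfl, linvm_uniform hVL, linvp_uniform hVL⟩
end
end
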